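/- arXiv:1103.2578 — 8 statements merged into one kernel-verified Lean document; each statement's English description precedes it below -/
import Mathlib

section
/- The average mixing matrix of a graph equals the sum of the entrywise (Schur) squares of the spectral idempotents: if A = Σ_r θ_r E_r is the spectral decomposition of the adjacency matrix, then lim_{C→∞} (1/C)∫_0^C (exp(itA) ∘ exp(-itA)) dt = Σ_r E_r ∘ E_r. -/
open Filter Topology Complex

/-! The spectral idempotents form a complete family of orthogonal idempotents, so
`exp (itA) = ∑ r, exp (itθ_r) E_r`, and the `(u, v)` entry of `M(t)` is the trigonometric polynomial
`∑ r s, E_r(u,v) E_s(u,v) exp (i(θ_r - θ_s)t)`. The Cesàro mean of `exp (iωt)` tends to `1` if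
`ω = 0` and to `0` otherwise, because its integral stays bounded; as the `θ_r` are distinct, only
the diagonal terms `r = s` survive. -/

theorem CompleteOrthogonalIdempotents.sum_smul_pow {𝕜 R ι : Type*} [Fintype ι] [CommSemiring 𝕜]
    [Semiring R] [Algebra 𝕜 R] {e : ι → R} (he : CompleteOrthogonalIdempotents e) (c : ι → 𝕜)
    (k : ℕ) : (∑ i, c i • e i) ^ k = ∑ i, c i ^ k • e i := by
  classical
  induction k with
  | zero => simp [he.complete]
  | succ k ih =>
    rw [pow_succ, ih]
    simp [Finset.sum_mul, Finset.mul_sum, he.mul_eq, smul_smul, pow_succ, mul_comm]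

theorem CompleteOrthogonalIdempotents.exp_sum_smul {𝕂 𝔸 ι : Type*} [Fintype ι] [RCLike 𝕂]
    [Ring 𝔸] [Algebra 𝕂 𝔸] [TopologicalSpace 𝔸] [IsTopologicalRing 𝔸] [ContinuousSMul 𝕂 𝔸]
    [T2Space 𝔸] {e : ι → 𝔸} (he : CompleteOrthogonalIdempotents e) (c : ι → 𝕂) :
    NormedSpace.exp (∑ i, c i • e i) = ∑ i, NormedSpace.exp (c i) • e i := by
  have hasSum : HasSum (fun k : ℕ => ∑ i, ((k.factorial⁻¹ : 𝕂) • c i ^ k) • e i)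
      (∑ i, NormedSpace.exp (c i) • e i) :=
    hasSum_sum fun i _ => (NormedSpace.exp_series_hasSum_exp' (𝕂 := 𝕂) (c i)).smul_const (e i)
  rw [NormedSpace.exp_eq_tsum 𝕂, ← hasSum.tsum_eq]
  simp_rw [he.sum_smul_pow, Finset.smul_sum, smul_assoc]

theorem tendsto_average_integral_cexp_mul_I (ω : ℝ) :
    Tendsto (fun C : ℝ => 1 / (C : ℂ) * ∫ t in (0 : ℝ)..C, cexp (ω * I * t)) atTop
      (𝓝 (if ω = 0 then 1 else 0)) := by
  split_ifs with hω
  · refine tendsto_const_nhds.congr' ?_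
    filter_upwards [eventually_gt_atTop 0] with C hC
    have : (C : ℂ) ≠ 0 := ofReal_ne_zero.2 hC.ne'
    simp [hω, this]
  · have hωI : (ω : ℂ) * I ≠ 0 := by simp [hω]
    have hbound (C : ℝ) : ‖∫ t in (0 : ℝ)..C, cexp (ω * I * t)‖ ≤ 2 / ‖(ω : ℂ) * I‖ := by
      rw [integral_exp_mul_complex hωI, norm_div]
      gcongr
      calc ‖cexp (ω * I * C) - cexp (ω * I * (0 : ℝ))‖
          ≤ ‖cexp ((ω * C : ℝ) * I)‖ + ‖(1 : ℂ)‖ := by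
            refine (norm_sub_le _ _).trans_eq ?_
            push_cast
            ring_nf
            simp
        _ = 2 := by rw [norm_exp_ofReal_mul_I]; norm_num
    have hinv : Tendsto (fun C : ℝ => 1 / (C : ℂ)) atTop (𝓝 0) := by
      simpa [Function.comp_def] using (continuous_ofReal.tendsto 0).comp tendsto_inv_atTop_zero
    exact hinv.zero_mul_isBoundedUnder_le ⟨_, eventually_map.2 (Eventually.of_forall hbound)⟩

theorem tendsto_average_integral_sum_cexp {ι : Type*} (s : Finset ι) (a : ι → ℂ) (ω : ι → ℝ) :
    Tendsto (fun C : ℝ => 1 / (C : ℂ) * ∫ t in (0 : ℝ)..C, ∑ k ∈ s, a k * cexp (ω k * I * t))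
      atTop (𝓝 (∑ k ∈ s with ω k = 0, a k)) := by
  have hint (k : ι) (C : ℝ) :
      IntervalIntegrable (fun t : ℝ => a k * cexp (ω k * I * t)) MeasureTheory.volume 0 C :=
    (by fun_prop : Continuous _).intervalIntegrable _ _
  simp_rw [intervalIntegral.integral_finsetSum fun k _ => hint k _,
    intervalIntegral.integral_const_mul, Finset.mul_sum, Finset.sum_filter]
  refine tendsto_finsetSum s fun k _ => ?_
  simpa [mul_left_comm, apply_ite] using
    (tendsto_average_integral_cexp_mul_I (ω k)).const_mul (a k)

theorem Matrix.exp_smul_map_ofReal_apply {ι n : Type*} [Fintype ι] [Fintype n] [DecidableEq n]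
    {E : ι → Matrix n n ℝ} (hE : CompleteOrthogonalIdempotents E) (θ : ι → ℝ) (z : ℂ)
    (u v : n) :
    NormedSpace.exp (z • (∑ r, θ r • E r).map ofReal) u v = ∑ r, cexp (z * θ r) * E r u v := by
  have hEC := hE.map ofRealHom.mapMatrix
  have hsmul : z • (∑ r, θ r • E r).map ofReal = ∑ r, (z * θ r) • (ofRealHom.mapMatrix ∘ E) r := by
    ext i j
    simp [Matrix.sum_apply, Finset.mul_sum, mul_assoc]
  rw [hsmul, hEC.exp_sum_smul, ← Complex.exp_eq_exp_ℂ]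
  simp [Matrix.sum_apply]

open Matrix Filter in
theorem average_mixing_eq_sum_schur_squares_general
    (n m : ℕ) (A : Matrix (Fin n) (Fin n) ℝ)
    (θ : Fin m → ℝ) (E : Fin m → Matrix (Fin n) (Fin n) ℝ)
    (hθ : Function.Injective θ)
    (hidem : ∀ r, E r * E r = E r)
    (horth : ∀ r s, r ≠ s → E r * E s = 0)
    (hsum : ∑ r, E r = 1)
    (hA : A = ∑ r, θ r • E r) (u v : Fin n) :
    Tendsto (fun C : ℝ => (1/C) * ∫ t in (0:ℝ)..C,
        (NormedSpace.exp ((t • Complex.I) • A.map Complex.ofReal) u v *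
          NormedSpace.exp (((-t) • Complex.I) • A.map Complex.ofReal) u v))
      atTop (nhds (((∑ r, (E r ⊙ E r)) u v : ℝ) : ℂ)) := by
  have hE : CompleteOrthogonalIdempotents E := ⟨⟨hidem, fun r s h => horth r s h⟩, hsum⟩
  have hmix (t : ℝ) :
      NormedSpace.exp ((t • I) • A.map ofReal) u v *
          NormedSpace.exp ((-t • I) • A.map ofReal) u v =
        ∑ p : Fin m × Fin m, (E p.1 u v * E p.2 u v : ℂ) * cexp ((θ p.1 - θ p.2 : ℝ) * I * t) := by
    rw [hA, exp_smul_map_ofReal_apply hE, exp_smul_map_ofReal_apply hE, Finset.sum_mul_sum,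
      ← Finset.univ_product_univ, Finset.sum_product]
    refine Finset.sum_congr rfl fun r _ => Finset.sum_congr rfl fun s _ => ?_
    rw [mul_mul_mul_comm, ← Complex.exp_add]
    push_cast [Complex.real_smul]
    ring_nf
  have hdiag : ∑ p : Fin m × Fin m with θ p.1 - θ p.2 = 0, (E p.1 u v * E p.2 u v : ℂ) =
      ((∑ r, E r ⊙ E r) u v : ℝ) := by
    simp_rw [sub_eq_zero, hθ.eq_iff, Finset.sum_filter, Fintype.sum_prod_type,
      Finset.sum_ite_eq, Finset.mem_univ, if_true]
    simp [Matrix.sum_apply]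
  simp_rw [hmix, ← hdiag]
  exact tendsto_average_integral_sum_cexp _ _ _

open Matrix Filter in
/-- The average mixing matrix of a graph equals the sum of the entrywise (Schur)
squares of the spectral idempotents. -/
theorem average_mixing_eq_sum_schur_squares
    (n m : ℕ) (A : Matrix (Fin n) (Fin n) ℝ)
    (θ : Fin m → ℝ) (E : Fin m → Matrix (Fin n) (Fin n) ℝ)
    (hθ : Function.Injective θ)
    (hsym : ∀ r, (E r)ᵀ = E r)
    (hidem : ∀ r, E r * E r = E r)
    (horth : ∀ r s, r ≠ s → E r * E s = 0)
    (hsum : ∑ r, E r = 1)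
    (hA : A = ∑ r, θ r • E r) (u v : Fin n) :
    Tendsto (fun C : ℝ => (1/C) * ∫ t in (0:ℝ)..C,
        (NormedSpace.exp ((t • Complex.I) • A.map Complex.ofReal) u v *
          NormedSpace.exp (((-t) • Complex.I) • A.map Complex.ofReal) u v))
      atTop (nhds (((∑ r, (E r ⊙ E r)) u v : ℝ) : ℂ)) :=
  average_mixing_eq_sum_schur_squares_general n m A θ E hθ hidem horth hsum hA u v
end

section
/- If the graph X is connected, then all entries of the average mixing matrix M̂ = Σ_r E_r ∘ E_r are strictly positive. -/
/-!
Expanding `A = ∑ θ_r E_r` with orthogonal idempotents gives `A ^ k = ∑ θ_r ^ k E_r`. A walk of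
length `k` from `u` to `v` makes `(A ^ k) u v` nonzero, so some `E_r u v` is nonzero, and then the
sum of squares `∑ (E_r u v) ^ 2` is positive.
-/

open Matrix

theorem sum_smul_pow_eq_sum_pow_smul {R A ι : Type*} [CommSemiring R] [Semiring A]
    [Algebra R A] [Fintype ι] (θ : ι → R) (E : ι → A)
    (hidem : ∀ r, E r * E r = E r) (horth : ∀ r s, r ≠ s → E r * E s = 0)
    (hsum : ∑ r, E r = 1) (k : ℕ) :
    (∑ r, θ r • E r) ^ k = ∑ r, θ r ^ k • E r := by
  induction k with
  | zero => simp only [pow_zero, one_smul, hsum]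
  | succ k ih =>
    rw [pow_succ, ih, Finset.sum_mul_sum]
    refine Finset.sum_congr rfl fun r _ => ?_
    rw [Finset.sum_eq_single r (fun s _ hs => by rw [smul_mul_smul_comm, horth r s hs.symm,
      smul_zero]) (fun h => absurd (Finset.mem_univ r) h), smul_mul_smul_comm, hidem, pow_succ]

theorem SimpleGraph.Walk.adjMatrix_pow_length_apply_ne_zero {V α : Type*} [Fintype V]
    [DecidableEq V] [Semiring α] [CharZero α] {G : SimpleGraph V} [DecidableRel G.Adj]
    {u v : V} (p : G.Walk u v) : (G.adjMatrix α ^ p.length) u v ≠ 0 := by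
  rw [SimpleGraph.adjMatrix_pow_apply_eq_card_walk, Nat.cast_ne_zero, ← Nat.pos_iff_ne_zero,
    Fintype.card_pos_iff]
  exact ⟨⟨p, rfl⟩⟩

theorem Matrix.exists_apply_ne_zero_of_sum_smul_apply_ne_zero {R S m n ι : Type*}
    [AddCommMonoid S] [SMulZeroClass R S] [Fintype ι] {c : ι → R} {E : ι → Matrix m n S}
    {u : m} {v : n} (h : (∑ r, c r • E r) u v ≠ 0) : ∃ r, E r u v ≠ 0 := by
  rw [Matrix.sum_apply] at h
  obtain ⟨r, -, hr⟩ := Finset.exists_ne_zero_of_sum_ne_zero h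
  exact ⟨r, right_ne_zero_of_smul hr⟩

theorem Matrix.sum_hadamard_self_apply_pos {R m n ι : Type*} [Ring R] [LinearOrder R]
    [IsStrictOrderedRing R] [Fintype ι] {E : ι → Matrix m n R} {u : m} {v : n}
    (h : ∃ r, E r u v ≠ 0) : 0 < (∑ r, E r ⊙ E r) u v := by
  obtain ⟨r, hr⟩ := h
  simp only [Matrix.sum_apply, Matrix.hadamard_apply]
  exact Finset.sum_pos' (fun s _ => mul_self_nonneg _) ⟨r, Finset.mem_univ r, mul_self_pos.mpr hr⟩

open Matrix in
theorem average_mixing_entries_pos_of_connected_general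
    (n m : ℕ) (G : SimpleGraph (Fin n)) [DecidableRel G.Adj]
    (hconn : G.Connected)
    (θ : Fin m → ℝ) (E : Fin m → Matrix (Fin n) (Fin n) ℝ)
    (hidem : ∀ r, E r * E r = E r)
    (horth : ∀ r s, r ≠ s → E r * E s = 0)
    (hsum : ∑ r, E r = 1)
    (hA : G.adjMatrix ℝ = ∑ r, θ r • E r) :
    ∀ u v : Fin n, 0 < (∑ r, (E r ⊙ E r)) u v := by
  intro u v
  obtain ⟨p⟩ := hconn.preconnected u v
  have hwalk := p.adjMatrix_pow_length_apply_ne_zero (α := ℝ)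
  rw [hA, sum_smul_pow_eq_sum_pow_smul θ E hidem horth hsum] at hwalk
  exact sum_hadamard_self_apply_pos (exists_apply_ne_zero_of_sum_smul_apply_ne_zero hwalk)

open Matrix in
/-- If the graph `X` is connected, then all entries of the average mixing matrix
`M̂ = ∑ r, E r ⊙ E r` are strictly positive. -/
theorem average_mixing_entries_pos_of_connected
    (n m : ℕ) (G : SimpleGraph (Fin n)) [DecidableRel G.Adj]
    (hconn : G.Connected)
    (θ : Fin m → ℝ) (E : Fin m → Matrix (Fin n) (Fin n) ℝ)
    (hθ : Function.Injective θ)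
    (hsym : ∀ r, (E r)ᵀ = E r)
    (hidem : ∀ r, E r * E r = E r)
    (horth : ∀ r s, r ≠ s → E r * E s = 0)
    (hsum : ∑ r, E r = 1)
    (hA : G.adjMatrix ℝ = ∑ r, θ r • E r) :
    ∀ u v : Fin n, 0 < (∑ r, (E r ⊙ E r)) u v :=
  average_mixing_entries_pos_of_connected_general n m G hconn θ E hidem horth hsum hA
end

section
/- The average mixing matrix of a graph has rational entries. -/
/-!
Keep only the nonzero idempotents `E₀, …, E_{N-1}` and let `W` be the Vandermonde matrix
of their (distinct) eigenvalues. Since `A ^ k = ∑ θ_r ^ k • E_r`, the vector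
`((A ^ k) a b)_{k < N}` is `e ᵥ* W` with `e_r = E_r a b`, so `∑ E_r a b * E_r c d = e ⬝ᵥ f`
is determined by rational vectors and the Gram matrix `Wᵀ * W`, whose entries are power sums
of the `θ_r`. These power sums are rational by Newton's identities: the coefficients of
`∏ (X - θ_r)` are rational, being the unique solution of the rational linear system that
expresses `A ^ N` through `1, A, …, A ^ (N-1)`.
-/

open Matrix Polynomial Finset

section SubringEntries

variable {R S : Type*} [CommRing R] [SetLike S R] [SubringClass S R] {T : S}
  {ι n : Type*} [Fintype n] [DecidableEq n]

theorem Matrix.det_mem {M : Matrix n n R} (hM : ∀ i j, M i j ∈ T) : M.det ∈ T := by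
  rw [det_apply']
  exact sum_mem fun σ _ => mul_mem (intCast_mem T _) (prod_mem fun i _ => hM _ _)

theorem Matrix.pow_apply_mem {M : Matrix n n R} (hM : ∀ i j, M i j ∈ T) (k : ℕ) (i j : n) :
    (M ^ k) i j ∈ T := by
  induction k generalizing j with
  | zero =>
    rw [pow_zero, one_apply]
    split_ifs
    exacts [one_mem T, zero_mem T]
  | succ k ih =>
    rw [pow_succ, mul_apply]
    exact sum_mem fun l _ => mul_mem (ih l) (hM l j)

end SubringEntries

section SubfieldSolutions

variable {L : Type*} [Field L] {K : Subfield L} {m n : Type*} [Fintype n] [DecidableEq n]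

theorem Matrix.mem_of_mulVec_eq_of_isUnit {M : Matrix n n L} {x b : n → L}
    (hM : ∀ i j, M i j ∈ K) (hb : ∀ i, b i ∈ K) (hu : IsUnit M) (hx : M *ᵥ x = b) (i : n) :
    x i ∈ K := by
  have hdet : M.det ≠ 0 := ((isUnit_iff_isUnit_det M).1 hu).ne_zero
  have hcramer : x = M.det⁻¹ • cramer M b := mulVec_injective_iff_isUnit.2 hu <| by
    rw [mulVec_smul, mulVec_cramer, hx, smul_smul, inv_mul_cancel₀ hdet, one_smul]
  rw [hcramer, Pi.smul_apply, smul_eq_mul, cramer_apply]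
  refine mul_mem (inv_mem (det_mem hM)) (det_mem fun k l => ?_)
  rw [updateCol_apply]
  split_ifs
  exacts [hb k, hM k l]

theorem Matrix.mem_of_mulVec_eq_of_injective [LinearOrder L] [IsStrictOrderedRing L]
    [Fintype m] {M : Matrix m n L} {x : n → L} {b : m → L}
    (hM : ∀ i j, M i j ∈ K) (hb : ∀ i, b i ∈ K) (hinj : Function.Injective M.mulVec)
    (hx : M *ᵥ x = b) (i : n) : x i ∈ K := by
  -- Normal equations: `Mᵀ * M` is injective since `v ⬝ᵥ (Mᵀ * M) *ᵥ v = ‖M *ᵥ v‖²`.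
  have hgram : Function.Injective (Mᵀ * M).mulVec := by
    intro y z hyz
    have hker : (Mᵀ * M) *ᵥ (y - z) = 0 := by rw [mulVec_sub, hyz, sub_self]
    have hsq : (M *ᵥ (y - z)) ⬝ᵥ (M *ᵥ (y - z)) = 0 := by
      nth_rewrite 1 [← vecMul_transpose]
      rw [← dotProduct_mulVec, mulVec_mulVec, hker, dotProduct_zero]
    apply hinj
    rw [← sub_eq_zero, ← mulVec_sub, ← dotProduct_self_eq_zero, hsq]
  refine mem_of_mulVec_eq_of_isUnit (fun k l => ?_) (fun k => ?_)
    (mulVec_injective_iff_isUnit.1 hgram) (by rw [← mulVec_mulVec, hx]) i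
  · exact sum_mem fun j _ => mul_mem (hM j k) (hM j l)
  · exact sum_mem fun j _ => mul_mem (hM j k) (hb j)

theorem Matrix.mem_of_sum_smul_eq [LinearOrder L] [IsStrictOrderedRing L] {ι ι' : Type*}
    [Fintype ι] [Fintype ι'] {v : n → Matrix ι ι' L} {B : Matrix ι ι' L} {c : n → L}
    (hv : ∀ k i j, v k i j ∈ K) (hB : ∀ i j, B i j ∈ K)
    (hinj : Function.Injective fun d : n → L => ∑ k, d k • v k) (hc : ∑ k, c k • v k = B)
    (k : n) : c k ∈ K := by
  let M : Matrix (ι × ι') n L := of fun p k => v k p.1 p.2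
  have hM : ∀ d, M *ᵥ d = fun p => (∑ k, d k • v k) p.1 p.2 := fun d => by
    ext p
    simp [M, mulVec, dotProduct, Matrix.sum_apply, mul_comm]
  refine mem_of_mulVec_eq_of_injective (M := M) (b := fun p => B p.1 p.2)
    (fun p k => hv k p.1 p.2) (fun p => hB p.1 p.2) (fun d d' h => hinj ?_) ?_ k
  · ext i j
    simpa [hM] using congrFun h (i, j)
  · rw [hM, hc]

theorem Matrix.dotProduct_mem_of_vecMul_mem {W : Matrix n n L} {e f : n → L} (hW : IsUnit W)
    (hG : ∀ k l, (Wᵀ * W) k l ∈ K) (he : ∀ k, (e ᵥ* W) k ∈ K) (hf : ∀ k, (f ᵥ* W) k ∈ K) :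
    e ⬝ᵥ f ∈ K := by
  have hy : (Wᵀ * W) *ᵥ (W⁻¹ *ᵥ f) = f ᵥ* W := by
    rw [mulVec_mulVec, Matrix.mul_assoc, mul_nonsing_inv _ ((isUnit_iff_isUnit_det W).1 hW),
      Matrix.mul_one, mulVec_transpose]
  have hf' : f = W *ᵥ (W⁻¹ *ᵥ f) := by
    rw [mulVec_mulVec, mul_nonsing_inv _ ((isUnit_iff_isUnit_det W).1 hW), one_mulVec]
  rw [hf', dotProduct_mulVec]
  exact sum_mem fun k _ =>
    mul_mem (he k) (mem_of_mulVec_eq_of_isUnit hG hf (((isUnit_transpose W).2 hW).mul hW) hy k)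

end SubfieldSolutions

namespace CompleteOrthogonalIdempotents

variable {R A κ : Type*} [Fintype κ] [DecidableEq κ] {e : κ → A}

section Semiring

variable [CommSemiring R] [Semiring A] [Algebra R A]

variable (R) in
def piAlgHom (he : CompleteOrthogonalIdempotents e) : (κ → R) →ₐ[R] A :=
  AlgHom.ofLinearMap (Fintype.linearCombination R e)
    (by simp [Fintype.linearCombination_apply, he.complete])
    (fun x y => by
      simp [Fintype.linearCombination_apply, sum_mul_sum, he.mul_eq, smul_smul, mul_comm])

theorem piAlgHom_apply (he : CompleteOrthogonalIdempotents e) (x : κ → R) :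
    he.piAlgHom R x = ∑ i, x i • e i :=
  Fintype.linearCombination_apply R e x

theorem aeval_sum_smul (he : CompleteOrthogonalIdempotents e) (θ : κ → R) (p : R[X]) :
    aeval (∑ i, θ i • e i) p = ∑ i, p.eval (θ i) • e i := by
  simpa [piAlgHom_apply, aeval_pi_apply] using aeval_algHom_apply (he.piAlgHom R) θ p

theorem sum_smul_pow_s5 (he : CompleteOrthogonalIdempotents e) (θ : κ → R) (k : ℕ) :
    (∑ i, θ i • e i) ^ k = ∑ i, θ i ^ k • e i := by
  simpa [piAlgHom_apply] using (map_pow (he.piAlgHom R) θ k).symm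

end Semiring

theorem piAlgHom_injective [Field R] [Ring A] [Algebra R A]
    (he : CompleteOrthogonalIdempotents e) (hne : ∀ i, e i ≠ 0) :
    Function.Injective (he.piAlgHom R) := by
  refine (injective_iff_map_eq_zero _).2 fun x hx => funext fun j => ?_
  have hj : x j • e j = 0 := by
    simpa [piAlgHom_apply, mul_sum, mul_smul_comm, he.mul_eq] using congrArg (e j * ·) hx
  exact (smul_eq_zero.1 hj).resolve_right (hne j)

end CompleteOrthogonalIdempotents

section PowerSums

variable {R S σ : Type*} [CommRing R] [SetLike S R] [SubringClass S R] {T : S}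

theorem Multiset.esymm_mem_of_coeff_mem {s : Multiset R}
    (h : ∀ k, (s.map (X - C ·)).prod.coeff k ∈ T) (j : ℕ) : s.esymm j ∈ T := by
  by_cases hj : j ≤ Multiset.card s
  · have hcoeff := prod_X_sub_C_coeff s (Nat.sub_le (Multiset.card s) j)
    rw [Nat.sub_sub_self hj] at hcoeff
    have : s.esymm j = (-1) ^ j * (s.map (X - C ·)).prod.coeff (Multiset.card s - j) := by
      rw [hcoeff, ← mul_assoc, ← mul_pow, neg_one_mul, neg_neg, one_pow, one_mul]
    rw [this]
    exact mul_mem (pow_mem (neg_mem (one_mem T)) j) (h _)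
  · simp [Multiset.esymm, Multiset.powersetCard_eq_empty _ (not_le.1 hj), zero_mem]

theorem Finset.sum_pow_mem_of_esymm_mem [Fintype σ] {f : σ → R}
    (h : ∀ j, (univ.val.map f).esymm j ∈ T) (k : ℕ) : ∑ i, f i ^ k ∈ T := by
  suffices ∀ k, MvPolynomial.aeval f (MvPolynomial.psum σ ℤ k) ∈ T by
    simpa [MvPolynomial.psum] using this k
  intro k
  induction k using Nat.strong_induction_on with
  | _ k ih =>
    rcases k.eq_zero_or_pos with rfl | hk
    · simp
    rw [MvPolynomial.psum_eq_mul_esymm_sub_sum σ ℤ k hk]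
    simp only [map_sub, map_mul, map_pow, map_neg, map_one, map_natCast, map_sum,
      MvPolynomial.aeval_esymm_eq_multiset_esymm]
    have hsign : ∀ j, ((-1) ^ j : R) ∈ T := fun j => pow_mem (neg_mem (one_mem T)) j
    refine sub_mem (mul_mem (mul_mem (hsign _) (natCast_mem T k)) (h k))
      (sum_mem fun a ha => mul_mem (mul_mem (hsign _) (h _)) (ih a.2 ?_))
    simp only [mem_filter, Finset.HasAntidiagonal.mem_antidiagonal, Set.mem_Ioo] at ha
    omega

theorem Finset.sum_pow_mem_of_coeff_prod_X_sub_C_mem [Fintype σ] {f : σ → R}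
    (h : ∀ k, (∏ i, (X - C (f i))).coeff k ∈ T) (k : ℕ) : ∑ i, f i ^ k ∈ T := by
  have hprod : ∏ i, (X - C (f i)) = ((univ.val.map f).map (X - C ·)).prod := by
    rw [Finset.prod_eq_multiset_prod, Multiset.map_map]
    rfl
  exact sum_pow_mem_of_esymm_mem (Multiset.esymm_mem_of_coeff_mem (hprod ▸ h)) k

end PowerSums

section SpectralDecomposition

variable {L ι : Type*} [Field L] [Fintype ι] [DecidableEq ι] {N : ℕ} {θ : Fin N → L}
  {E : Fin N → Matrix ι ι L}

theorem Matrix.isUnit_vandermonde (hθ : Function.Injective θ) : IsUnit (vandermonde θ) :=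
  (isUnit_iff_isUnit_det _).2 (det_vandermonde_ne_zero_iff.2 hθ).isUnit

theorem CompleteOrthogonalIdempotents.sum_smul_pow_eq_piAlgHom_vandermonde
    (he : CompleteOrthogonalIdempotents E) (d : Fin N → L) :
    ∑ i, d i • (∑ r, θ r • E r) ^ (i : ℕ) = he.piAlgHom L (vandermonde θ *ᵥ d) := by
  simp only [he.sum_smul_pow_s5, piAlgHom_apply, mulVec, dotProduct, vandermonde_apply,
    smul_sum, smul_smul, sum_smul]
  rw [sum_comm]
  simp_rw [mul_comm]

theorem CompleteOrthogonalIdempotents.injective_sum_smul_pow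
    (he : CompleteOrthogonalIdempotents E) (hE : ∀ r, E r ≠ 0) (hθ : Function.Injective θ) :
    Function.Injective fun d : Fin N → L => ∑ i, d i • (∑ r, θ r • E r) ^ (i : ℕ) := by
  intro d d' h
  simp only [he.sum_smul_pow_eq_piAlgHom_vandermonde] at h
  exact mulVec_injective_iff_isUnit.2 (isUnit_vandermonde hθ) (he.piAlgHom_injective hE h)

theorem CompleteOrthogonalIdempotents.coeff_prod_X_sub_C_mem [LinearOrder L]
    [IsStrictOrderedRing L] {K : Subfield L} (he : CompleteOrthogonalIdempotents E)
    (hE : ∀ r, E r ≠ 0) (hθ : Function.Injective θ)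
    (hA : ∀ i j, (∑ r, θ r • E r) i j ∈ K) (k : ℕ) : (∏ r, (X - C (θ r))).coeff k ∈ K := by
  set ν : L[X] := ∏ r, (X - C (θ r))
  have hmonic : ν.Monic := monic_prod_of_monic _ _ fun r _ => monic_X_sub_C (θ r)
  have hdeg : ν.natDegree = N := by simp [ν]
  have hroot : aeval (∑ r, θ r • E r) ν = 0 := by
    rw [he.aeval_sum_smul]
    refine sum_eq_zero fun r _ => ?_
    rw [eval_prod, prod_eq_zero (mem_univ r) (by simp), zero_smul]
  have hsystem : ∑ i : Fin N, ν.coeff i • (∑ r, θ r • E r) ^ (i : ℕ) =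
      -(∑ r, θ r • E r) ^ N := by
    rw [hmonic.as_sum, hdeg] at hroot
    simp only [map_add, map_pow, aeval_X, map_sum, map_mul, aeval_C, Algebra.algebraMap_eq_smul_one,
      smul_mul_assoc, one_mul] at hroot
    rw [eq_neg_iff_add_eq_zero, add_comm, ← hroot, Fin.sum_univ_eq_sum_range
      (fun i => ν.coeff i • (∑ r, θ r • E r) ^ i)]
  rcases lt_trichotomy k N with hk | rfl | hk
  · exact mem_of_sum_smul_eq (v := fun i : Fin N => (∑ r, θ r • E r) ^ (i : ℕ))
      (fun i => pow_apply_mem hA i)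
      (fun i j => neg_mem (pow_apply_mem hA N i j)) (he.injective_sum_smul_pow hE hθ)
      hsystem ⟨k, hk⟩
  · rw [← hdeg, hmonic.coeff_natDegree]
    exact one_mem K
  · rw [coeff_eq_zero_of_natDegree_lt (hdeg ▸ hk)]
    exact zero_mem K

theorem CompleteOrthogonalIdempotents.sum_mul_apply_mem_of_ne_zero [LinearOrder L]
    [IsStrictOrderedRing L] {K : Subfield L} (he : CompleteOrthogonalIdempotents E)
    (hE : ∀ r, E r ≠ 0) (hθ : Function.Injective θ)
    (hA : ∀ i j, (∑ r, θ r • E r) i j ∈ K) (a b c d : ι) : ∑ r, E r a b * E r c d ∈ K := by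
  have hpow : ∀ u v k, ((fun r => E r u v) ᵥ* vandermonde θ) k ∈ K := fun u v k => by
    simpa [he.sum_smul_pow_s5, vecMul, dotProduct, Matrix.sum_apply, mul_comm]
      using pow_apply_mem hA k u v
  refine dotProduct_mem_of_vecMul_mem (isUnit_vandermonde hθ) (fun k l => ?_)
    (hpow a b) (hpow c d)
  rw [vandermonde_transpose_mul_vandermonde]
  exact sum_pow_mem_of_coeff_prod_X_sub_C_mem (he.coeff_prod_X_sub_C_mem hE hθ hA) _

end SpectralDecomposition

theorem Fintype.sum_subtype_of_eq_zero {κ M : Type*} [Fintype κ] [AddCommMonoid M]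
    (p : κ → Prop) [DecidablePred p] {g : κ → M} (hg : ∀ r, ¬p r → g r = 0) :
    ∑ r : Subtype p, g r = ∑ r, g r := by
  rw [← Fintype.sum_subtype_add_sum_subtype p g,
    Fintype.sum_eq_zero (fun r : {r // ¬p r} => g r) fun r => hg r r.2, add_zero]

theorem CompleteOrthogonalIdempotents.sum_mul_apply_mem {L ι κ : Type*} [Field L]
    [LinearOrder L] [IsStrictOrderedRing L] [Fintype ι] [DecidableEq ι] [Fintype κ]
    {K : Subfield L} {θ : κ → L} {E : κ → Matrix ι ι L}
    (he : CompleteOrthogonalIdempotents E) (hθ : Function.Injective θ)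
    (hA : ∀ i j, (∑ r, θ r • E r) i j ∈ K) (a b c d : ι) :
    ∑ r, E r a b * E r c d ∈ K := by
  classical
  let σ : Fin (Fintype.card {r // E r ≠ 0}) ≃ {r // E r ≠ 0} := (Fintype.equivFin _).symm
  have hsupp : CompleteOrthogonalIdempotents fun r : {r // E r ≠ 0} => E r :=
    ⟨⟨fun r => he.idem r, fun r s h => he.ortho (Subtype.coe_injective.ne h)⟩, by
      rw [Fintype.sum_subtype_of_eq_zero _ fun r hr => not_not.1 hr, he.complete]⟩
  have key := ((CompleteOrthogonalIdempotents.equiv σ).2 hsupp).sum_mul_apply_mem_of_ne_zero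
    (K := K) (θ := fun i => θ (σ i)) (E := fun i => E (σ i)) (fun i => (σ i).2)
    (hθ.comp (Subtype.val_injective.comp σ.injective)) ?_ a b c d
  · rwa [Equiv.sum_comp σ fun r => E r a b * E r c d, Fintype.sum_subtype_of_eq_zero _
      (g := fun r => E r a b * E r c d) fun r hr => by simp [not_not.1 hr]] at key
  · rwa [Equiv.sum_comp σ fun r => θ r • E r, Fintype.sum_subtype_of_eq_zero _
      (g := fun r => θ r • E r) fun r hr => by simp [not_not.1 hr]]

open Matrix in
theorem average_mixing_rational_general
    (n m : ℕ) (G : SimpleGraph (Fin n)) [DecidableRel G.Adj]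
    (θ : Fin m → ℝ) (E : Fin m → Matrix (Fin n) (Fin n) ℝ)
    (hθ : Function.Injective θ)
    (horth : ∀ r s, r ≠ s → E r * E s = 0)
    (hsum : ∑ r, E r = 1)
    (hA : G.adjMatrix ℝ = ∑ r, θ r • E r) :
    ∀ u v : Fin n, ∃ q : ℚ, (∑ r, (E r ⊙ E r)) u v = q := by
  have he : CompleteOrthogonalIdempotents E :=
    CompleteOrthogonalIdempotents.iff_ortho_complete.2 ⟨fun r s h => horth r s h, hsum⟩
  have hrat : ∀ i j, (∑ r, θ r • E r) i j ∈ (Rat.castHom ℝ).fieldRange := fun i j => by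
    rw [← hA, SimpleGraph.adjMatrix_apply]
    split_ifs
    exacts [one_mem _, zero_mem _]
  intro u v
  obtain ⟨q, hq⟩ := he.sum_mul_apply_mem hθ hrat u v u v
  exact ⟨q, by simp [Matrix.sum_apply, ← hq]⟩

open Matrix in
/-- The average mixing matrix of a graph has rational entries. -/
theorem average_mixing_rational
    (n m : ℕ) (G : SimpleGraph (Fin n)) [DecidableRel G.Adj]
    (θ : Fin m → ℝ) (E : Fin m → Matrix (Fin n) (Fin n) ℝ)
    (hθ : Function.Injective θ)
    (hsym : ∀ r, (E r)ᵀ = E r)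
    (hidem : ∀ r, E r * E r = E r)
    (horth : ∀ r s, r ≠ s → E r * E s = 0)
    (hsum : ∑ r, E r = 1)
    (hA : G.adjMatrix ℝ = ∑ r, θ r • E r) :
    ∀ u v : Fin n, ∃ q : ℚ, (∑ r, (E r ⊙ E r)) u v = q :=
  average_mixing_rational_general n m G θ E hθ horth hsum hA
end

section
/- The average mixing matrix of the path P_n equals (1/(2n+2))·(2J + I + T), where T is the permutation matrix swapping vertex j with vertex n+1-j for each j. -/
/-!
Write `x = (r + 1) π / (n + 1)`. Expanding `sin² ((j + 1) x) sin² ((k + 1) x)` into cosines of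
`2 (j + 1) x`, `2 (k + 1) x`, `2 (j + k + 2) x` and `2 (j - k) x`, each sum over `r` is a sum of
real parts of `(n + 1)`-th roots of unity, which equals `-1` unless `n + 1` divides the multiplier
of `x`. For `j, k < n` this happens only for `j = k` (the identity) and `j + k + 2 = n + 1` (the
reversal `T`).
-/

open Real Finset

lemma geom_sum_eq_zero_of_pow_eq_one {R : Type*} [DivisionRing R] {z : R} {N : ℕ}
    (hz : z ^ N = 1) (hz1 : z ≠ 1) : ∑ r ∈ range N, z ^ r = 0 := by
  rw [geom_sum_eq hz1, hz, sub_self, zero_div]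

lemma sum_range_cos_two_pi_mul_div {N : ℕ} (hN : N ≠ 0) (m : ℤ) :
    ∑ r ∈ range N, cos (2 * π * m * r / N) = if (N : ℤ) ∣ m then N else 0 := by
  set ζ := Complex.exp (2 * π * Complex.I / N)
  have hζ : IsPrimitiveRoot ζ N := Complex.isPrimitiveRoot_exp N hN
  have hcos (r : ℕ) : cos (2 * π * m * r / N) = ((ζ ^ m) ^ r).re := by
    rw [← Complex.exp_int_mul, ← Complex.exp_nat_mul, ← Complex.exp_ofReal_mul_I_re]
    congr 2
    push_cast
    ring
  simp only [hcos, ← Complex.re_sum]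
  split_ifs with hdvd
  · simp [(hζ.zpow_eq_one_iff_dvd m).2 hdvd]
  · have hpow : (ζ ^ m) ^ N = 1 := by
      rw [← zpow_natCast, ← zpow_mul, mul_comm, zpow_mul, zpow_natCast, hζ.pow_eq_one, one_zpow]
    rw [geom_sum_eq_zero_of_pow_eq_one hpow (mt (hζ.zpow_eq_one_iff_dvd m).1 hdvd),
      Complex.zero_re, Nat.cast_zero]

lemma sum_range_cos_two_pi_mul_succ_div (n : ℕ) (m : ℤ) :
    ∑ r ∈ range n, cos (2 * π * m * (r + 1) / (n + 1)) =
      (if (n + 1 : ℤ) ∣ m then (n + 1 : ℝ) else 0) - 1 := by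
  have h := sum_range_cos_two_pi_mul_div n.succ_ne_zero m
  rw [sum_range_succ'] at h
  push_cast at h
  rw [eq_sub_iff_add_eq, ← h]
  simp

lemma sin_sq_mul_sin_sq (A B : ℝ) :
    sin A ^ 2 * sin B ^ 2 =
      (2 - 2 * cos (2 * A) - 2 * cos (2 * B) + cos (2 * A + 2 * B) + cos (2 * A - 2 * B)) / 8 := by
  simp only [cos_add, cos_sub, cos_two_mul, sin_two_mul]
  linear_combination (1 - cos B ^ 2) * sin_sq_add_cos_sq A + sin A ^ 2 * sin_sq_add_cos_sq B

lemma Nat.dvd_iff_eq_of_lt_two_mul {a b : ℕ} (ha : a ≠ 0) (hab : a < 2 * b) : b ∣ a ↔ a = b :=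
  ⟨fun h => Nat.eq_of_dvd_of_lt_two_mul ha h hab, fun h => h ▸ dvd_rfl⟩

lemma natCast_dvd_sub_iff_eq_of_lt {N j k : ℕ} (hj : j < N) (hk : k < N) :
    (N : ℤ) ∣ (j : ℤ) - k ↔ j = k :=
  (Nat.modEq_iff_dvd (n := N)).symm.trans
    ⟨fun hkj => (hkj.eq_of_lt_of_lt hk hj).symm, fun hjk => hjk ▸ rfl⟩

/-- The entry `(E_{r+1})_{j+1, k+1}` of the spectral idempotents of the path `P_n`. -/
noncomputable def pathIdempotent (n r j k : ℕ) : ℝ :=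
  (2 / (n + 1)) * sin (((j : ℝ) + 1) * ((r : ℝ) + 1) * π / (n + 1)) *
    sin (((k : ℝ) + 1) * ((r : ℝ) + 1) * π / (n + 1))

lemma sum_range_pathIdempotent_sq {n j k : ℕ} (hj : j < n) (hk : k < n) :
    ∑ r ∈ range n, pathIdempotent n r j k ^ 2 =
      (2 + (if j = k then 1 else 0) + (if j + 1 + (k + 1) = n + 1 then 1 else 0)) /
        (2 * n + 2) := by
  have hterm (r : ℕ) : pathIdempotent n r j k ^ 2 = (2 / (n + 1)) ^ 2 / 8 *
      (2 - 2 * cos (2 * π * ((j : ℝ) + 1) * (r + 1) / (n + 1))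
        - 2 * cos (2 * π * ((k : ℝ) + 1) * (r + 1) / (n + 1))
        + cos (2 * π * ((j : ℝ) + 1 + (k + 1)) * (r + 1) / (n + 1))
        + cos (2 * π * ((j : ℝ) - k) * (r + 1) / (n + 1))) := by
    rw [pathIdempotent, mul_pow, mul_pow, mul_assoc _ (_ ^ 2), sin_sq_mul_sin_sq]
    ring_nf
  have hj_dvd : ¬ (n + 1 : ℤ) ∣ (j : ℤ) + 1 := by
    exact_mod_cast Nat.not_dvd_of_pos_of_lt j.succ_pos (by omega)
  have hk_dvd : ¬ (n + 1 : ℤ) ∣ (k : ℤ) + 1 := by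
    exact_mod_cast Nat.not_dvd_of_pos_of_lt k.succ_pos (by omega)
  have hsum_dvd : (n + 1 : ℤ) ∣ (j : ℤ) + 1 + (k + 1) ↔ j + 1 + (k + 1) = n + 1 := by
    exact_mod_cast Nat.dvd_iff_eq_of_lt_two_mul (a := j + 1 + (k + 1)) (b := n + 1)
      (by omega) (by omega)
  have hdiff_dvd : (n + 1 : ℤ) ∣ (j : ℤ) - k ↔ j = k := by
    exact_mod_cast natCast_dvd_sub_iff_eq_of_lt (N := n + 1) (by omega) (by omega)
  have hj := sum_range_cos_two_pi_mul_succ_div n ((j : ℤ) + 1)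
  have hk := sum_range_cos_two_pi_mul_succ_div n ((k : ℤ) + 1)
  have hsum := sum_range_cos_two_pi_mul_succ_div n ((j : ℤ) + 1 + (k + 1))
  have hdiff := sum_range_cos_two_pi_mul_succ_div n ((j : ℤ) - k)
  simp only [hj_dvd, hk_dvd, hsum_dvd, hdiff_dvd, if_false] at hj hk hsum hdiff
  push_cast at hj hk hsum hdiff
  simp only [hterm, ← mul_sum, sum_add_distrib, sum_sub_distrib, hj, hk, hsum, hdiff, sum_const,
    card_range, nsmul_eq_mul]
  have : (n : ℝ) + 1 ≠ 0 := by positivity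
  split_ifs <;> field_simp <;> ring

open Matrix Real in
theorem average_mixing_path_general
    (n : ℕ)
    (E : Fin n → Matrix (Fin n) (Fin n) ℝ)
    (hE : ∀ r j k, E r j k =
      (2 / (n + 1)) * sin (((j.val : ℝ) + 1) * ((r.val : ℝ) + 1) * π / (n + 1)) *
        sin (((k.val : ℝ) + 1) * ((r.val : ℝ) + 1) * π / (n + 1)))
    (J T : Matrix (Fin n) (Fin n) ℝ)
    (hJ : ∀ j k, J j k = 1)
    (hT : ∀ j k, T j k = if j.val + 1 + (k.val + 1) = n + 1 then 1 else 0) :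
    ∑ r, (E r ⊙ E r) = (1 / (2 * (n : ℝ) + 2)) • (2 • J + 1 + T) := by
  ext j k
  have hentry : (∑ r, E r ⊙ E r) j k = ∑ r ∈ range n, pathIdempotent n r j k ^ 2 := by
    simp only [Matrix.sum_apply, hadamard_apply, hE, ← sq]
    exact Fin.sum_univ_eq_sum_range (fun r => pathIdempotent n r j k ^ 2) n
  rw [hentry, sum_range_pathIdempotent_sq j.isLt k.isLt]
  simp only [Matrix.smul_apply, Matrix.add_apply, one_apply, hJ, hT, Fin.val_inj, smul_eq_mul]
  ring

open Matrix Real in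
/-- The average mixing matrix of the path `P_n` equals `(1/(2n+2)) (2J + I + T)`,
where `T` is the permutation matrix swapping vertex `j` with vertex `n+1-j`.
(Vertices are indexed `0, …, n-1`, standing for `1, …, n`.) -/
theorem average_mixing_path
    (n : ℕ) (hn : 0 < n)
    (E : Fin n → Matrix (Fin n) (Fin n) ℝ)
    (hE : ∀ r j k, E r j k =
      (2 / (n + 1)) * sin (((j.val : ℝ) + 1) * ((r.val : ℝ) + 1) * π / (n + 1)) *
        sin (((k.val : ℝ) + 1) * ((r.val : ℝ) + 1) * π / (n + 1)))
    (J T : Matrix (Fin n) (Fin n) ℝ)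
    (hJ : ∀ j k, J j k = 1)
    (hT : ∀ j k, T j k = if j.val + 1 + (k.val + 1) = n + 1 then 1 else 0) :
    ∑ r, (E r ⊙ E r) = (1 / (2 * (n : ℝ) + 2)) • (2 • J + 1 + T) :=
  average_mixing_path_general n E hE J T hJ hT
end

section
/- If E_1,…,E_{n-1} are the spectral idempotents of A(P_{n-1}) with eigenvalues θ_1,…,θ_{n-1}, then the spectral idempotents of the Laplacian L(P_n) = DDᵀ are (1/n)J together with (2-θ_r)^{-1}·D E_r Dᵀ for r = 1,…,n-1; i.e., each (2-θ_r)^{-1} D E_r Dᵀ is an idempotent orthogonal projection onto an eigenspace of L(P_n) with eigenvalue 2-θ_r. -/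
/-!
Since `DᵀD = 2 - A = ∑ (2 - θ_r) E_r`, each `E_r` is an eigenprojection of `DᵀD`, and
conjugating by `D` transports it:
`(D E_r Dᵀ)(D E_s Dᵀ) = D E_r (DᵀD) E_s Dᵀ = δ_rs (2 - θ_r) D E_r Dᵀ`,
so the `(2 - θ_r)⁻¹ D E_r Dᵀ` are orthogonal symmetric idempotents on which `D Dᵀ` acts as
`2 - θ_r`. The columns of `D` sum to zero, so `J D = 0 = Dᵀ J` and `J / (n + 1)` is orthogonal to
all of them. Their sum `S` is therefore a symmetric idempotent of trace `1 + ∑ tr E_r = n + 1`,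
so `1 - S` is a symmetric idempotent of trace zero; as `tr (Nᵀ N)` is the sum of the squares of
the entries of `N`, this forces `S = 1`.
-/

open Matrix Finset

section HermitianIdempotent

variable {n R : Type*} [Fintype n] [PartialOrder R] [Ring R] [StarRing R]
  [StarOrderedRing R] [NoZeroDivisors R] {N : Matrix n n R}

theorem Matrix.IsHermitian.eq_zero_of_isIdempotentElem_of_trace_eq_zero (hN : N.IsHermitian)
    (hidem : IsIdempotentElem N) (htr : N.trace = 0) : N = 0 := by
  rwa [← trace_conjTranspose_mul_self_eq_zero_iff, hN.eq, hidem.eq]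

theorem Matrix.IsHermitian.eq_one_of_isIdempotentElem_of_trace_eq_card [DecidableEq n]
    (hN : N.IsHermitian) (hidem : IsIdempotentElem N) (htr : N.trace = Fintype.card n) : N = 1 := by
  have h := (isHermitian_one.sub hN).eq_zero_of_isIdempotentElem_of_trace_eq_zero hidem.one_sub
    (by rw [trace_sub, trace_one, htr, sub_self])
  exact (sub_eq_zero.mp h).symm

end HermitianIdempotent

theorem OrthogonalIdempotents.sum_smul_mul {ι R A : Type*} [Fintype ι] [CommSemiring R]
    [Semiring A] [Algebra R A] {e : ι → A} (he : OrthogonalIdempotents e) (c : ι → R) (i : ι) :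
    (∑ j, c j • e j) * e i = c i • e i := by
  classical
  simp [Finset.sum_mul, he.mul_eq]

section Conjugation

variable {m n R : Type*} [Fintype n] [CommRing R]

theorem Matrix.transpose_conj (D : Matrix m n R) (F : Matrix n n R) :
    (D * F * Dᵀ)ᵀ = D * Fᵀ * Dᵀ := by
  rw [transpose_mul, transpose_mul, transpose_transpose, Matrix.mul_assoc]

variable [Fintype m] {D : Matrix m n R} {F : Matrix n n R} {c : R}

theorem Matrix.conj_mul_conj_of_mul_eq_smul (G : Matrix n n R) (hF : Dᵀ * D * F = c • F) :
    D * G * Dᵀ * (D * F * Dᵀ) = c • (D * (G * F) * Dᵀ) := by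
  calc D * G * Dᵀ * (D * F * Dᵀ) = D * (G * (Dᵀ * D * F)) * Dᵀ := by
        simp only [Matrix.mul_assoc]
    _ = c • (D * (G * F) * Dᵀ) := by rw [hF, Matrix.mul_smul, Matrix.mul_smul, Matrix.smul_mul]

theorem Matrix.mul_transpose_mul_conj_of_mul_eq_smul (hF : Dᵀ * D * F = c • F) :
    D * Dᵀ * (D * F * Dᵀ) = c • (D * F * Dᵀ) := by
  calc D * Dᵀ * (D * F * Dᵀ) = D * (Dᵀ * D * F) * Dᵀ := by simp only [Matrix.mul_assoc]
    _ = c • (D * F * Dᵀ) := by rw [hF, Matrix.mul_smul, Matrix.smul_mul]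

theorem Matrix.trace_conj_of_mul_eq_smul (hF : Dᵀ * D * F = c • F) :
    (D * F * Dᵀ).trace = c * F.trace := by
  rw [trace_mul_cycle, hF, trace_smul, smul_eq_mul]

theorem Matrix.mul_conj_eq_zero {P : Matrix m m R} (hPD : P * D = 0) (F : Matrix n n R) :
    P * (D * F * Dᵀ) = 0 := by
  rw [← Matrix.mul_assoc, ← Matrix.mul_assoc, hPD, Matrix.zero_mul, Matrix.zero_mul]

theorem Matrix.conj_mul_eq_zero {P : Matrix m m R} (hDP : Dᵀ * P = 0) (F : Matrix n n R) :
    D * F * Dᵀ * P = 0 := by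
  rw [Matrix.mul_assoc, hDP, Matrix.mul_zero]

end Conjugation

section SpectralConjugation

variable {ι m n K : Type*} [Fintype m] [Fintype n] [DecidableEq n] [Field K]
  {D : Matrix m n K} {E : ι → Matrix n n K} {c : ι → K}

theorem OrthogonalIdempotents.inv_smul_conj [DecidableEq m] (hE : OrthogonalIdempotents E)
    (hc : ∀ r, c r ≠ 0) (hDE : ∀ r, Dᵀ * D * E r = c r • E r) :
    OrthogonalIdempotents fun r ↦ (c r)⁻¹ • (D * E r * Dᵀ) where
  idem r := by
    rw [IsIdempotentElem, smul_mul_smul_comm, conj_mul_conj_of_mul_eq_smul _ (hDE r),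
      (hE.idem r).eq, smul_smul, inv_mul_cancel_right₀ (hc r)]
  ortho r s hrs := by
    dsimp only
    rw [smul_mul_smul_comm, conj_mul_conj_of_mul_eq_smul _ (hDE s), hE.ortho hrs,
      Matrix.mul_zero, Matrix.zero_mul, smul_zero, smul_zero]

theorem CompleteOrthogonalIdempotents.trace_sum_inv_smul_conj [Fintype ι]
    (hE : CompleteOrthogonalIdempotents E) (hc : ∀ r, c r ≠ 0)
    (hDE : ∀ r, Dᵀ * D * E r = c r • E r) :
    (∑ r, (c r)⁻¹ • (D * E r * Dᵀ)).trace = Fintype.card n := by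
  calc (∑ r, (c r)⁻¹ • (D * E r * Dᵀ)).trace = ∑ r, (E r).trace := by
        rw [trace_sum]
        refine Finset.sum_congr rfl fun r _ ↦ ?_
        rw [trace_smul, trace_conj_of_mul_eq_smul (hDE r), smul_eq_mul,
          inv_mul_cancel_left₀ (hc r)]
    _ = Fintype.card n := by rw [← trace_sum, hE.complete, trace_one]

theorem CompleteOrthogonalIdempotents.add_sum_inv_smul_conj_eq_one [DecidableEq m] [Fintype ι]
    {D : Matrix m n ℝ} {E : ι → Matrix n n ℝ} {c : ι → ℝ} (hE : CompleteOrthogonalIdempotents E)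
    (hEt : ∀ r, (E r)ᵀ = E r) (hc : ∀ r, c r ≠ 0) (hDE : ∀ r, Dᵀ * D * E r = c r • E r)
    {P : Matrix m m ℝ} (hP : IsIdempotentElem P) (hPt : Pᵀ = P) (hPD : P * D = 0)
    (hDP : Dᵀ * P = 0) (htr : P.trace + Fintype.card n = Fintype.card m) :
    P + ∑ r, (c r)⁻¹ • (D * E r * Dᵀ) = 1 := by
  have hPQ : OrthogonalIdempotents (Option.elim · P fun r ↦ (c r)⁻¹ • (D * E r * Dᵀ)) :=
    (hE.toOrthogonalIdempotents.inv_smul_conj hc hDE).option P hP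
      (by simp [Finset.mul_sum, mul_conj_eq_zero hPD])
      (by simp [Finset.sum_mul, conj_mul_eq_zero hDP])
  refine IsHermitian.eq_one_of_isIdempotentElem_of_trace_eq_card ?_ ?_ ?_
  · rw [isHermitian_iff_isSymm, IsSymm, transpose_add, transpose_sum, hPt]
    simp only [transpose_smul, transpose_conj, hEt]
  · simpa [Fintype.sum_option] using hPQ.isIdempotentElem_sum (s := univ)
  · rw [trace_add, hE.trace_sum_inv_smul_conj hc hDE, htr]

end SpectralConjugation

section AllOnes

variable {m n R : Type*} [CommRing R] {J : Matrix m m R}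

theorem Matrix.transpose_of_forall_eq_one (hJ : ∀ i j, J i j = 1) : Jᵀ = J := by
  ext i j
  simp [hJ]

variable [Fintype m]

theorem Matrix.trace_of_forall_eq_one (hJ : ∀ i j, J i j = 1) : J.trace = Fintype.card m := by
  simp [trace, hJ]

theorem Matrix.mul_self_of_forall_eq_one (hJ : ∀ i j, J i j = 1) :
    J * J = (Fintype.card m : R) • J := by
  ext i j
  simp [mul_apply, hJ]

theorem Matrix.mul_eq_zero_of_forall_eq_one (hJ : ∀ i j, J i j = 1) {D : Matrix m n R}
    (hD : ∀ j, ∑ i, D i j = 0) : J * D = 0 := by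
  ext i j
  simp [mul_apply, hJ, hD]

theorem Matrix.transpose_mul_eq_zero_of_forall_eq_one (hJ : ∀ i j, J i j = 1)
    {D : Matrix m n R} (hD : ∀ j, ∑ i, D i j = 0) : Dᵀ * J = 0 := by
  rw [← transpose_of_forall_eq_one hJ, ← transpose_mul, mul_eq_zero_of_forall_eq_one hJ hD,
    transpose_zero]

end AllOnes

section PathIncidence

variable {n : ℕ} {R : Type*} [CommRing R]

def pathIncidence (n : ℕ) (R : Type*) [Ring R] : Matrix (Fin (n + 1)) (Fin n) R :=
  of fun i j ↦ (if i = j.castSucc then 1 else 0) - (if i = j.succ then 1 else 0)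

theorem eq_pathIncidence {D : Matrix (Fin (n + 1)) (Fin n) R} (hD : ∀ i j, D i j =
      if i.val = j.val then 1 else if i.val = j.val + 1 then -1 else 0) :
    D = pathIncidence n R := by
  ext i j
  simp only [hD, pathIncidence, of_apply, Fin.ext_iff, Fin.val_castSucc, Fin.val_succ]
  split_ifs <;> first | (exfalso; omega) | norm_num

theorem sum_pathIncidence_apply (j : Fin n) : ∑ i, pathIncidence n R i j = 0 := by
  simp [pathIncidence, sum_sub_distrib]

theorem pathIncidence_transpose_mul_self {A : Matrix (Fin n) (Fin n) R}
    (hA : ∀ j k, A j k = if j.val + 1 = k.val ∨ k.val + 1 = j.val then 1 else 0) :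
    (pathIncidence n R)ᵀ * pathIncidence n R = (2 : R) • 1 - A := by
  ext j k
  simp only [mul_apply, transpose_apply, pathIncidence, of_apply, sub_mul, ite_mul, one_mul,
    zero_mul, sum_sub_distrib, sum_ite_eq', mem_univ, if_true]
  simp only [hA, Matrix.sub_apply, Matrix.smul_apply, smul_eq_mul, one_apply, Fin.ext_iff,
    Fin.val_castSucc, Fin.val_succ]
  split_ifs <;> first | (exfalso; omega) | norm_num

end PathIncidence

open Matrix in
theorem laplacian_path_idempotents_general
    (n : ℕ) (D : Matrix (Fin (n + 1)) (Fin n) ℝ)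
    (hD : ∀ i j, D i j =
      if i.val = j.val then 1 else if i.val = j.val + 1 then -1 else 0)
    (A : Matrix (Fin n) (Fin n) ℝ)
    (hA : ∀ j k, A j k = if j.val + 1 = k.val ∨ k.val + 1 = j.val then 1 else 0)
    (θ : Fin n → ℝ) (E : Fin n → Matrix (Fin n) (Fin n) ℝ)
    (hθ2 : ∀ r, θ r < 2)
    (hsym : ∀ r, (E r)ᵀ = E r)
    (hidem : ∀ r, E r * E r = E r)
    (horth : ∀ r s, r ≠ s → E r * E s = 0)
    (hsum : ∑ r, E r = 1)
    (hAE : A = ∑ r, θ r • E r)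
    (J : Matrix (Fin (n + 1)) (Fin (n + 1)) ℝ) (hJ : ∀ j k, J j k = 1) :
    (∀ r, ((2 - θ r)⁻¹ • (D * E r * Dᵀ)) * ((2 - θ r)⁻¹ • (D * E r * Dᵀ)) =
        (2 - θ r)⁻¹ • (D * E r * Dᵀ)) ∧
    (∀ r, ((2 - θ r)⁻¹ • (D * E r * Dᵀ))ᵀ = (2 - θ r)⁻¹ • (D * E r * Dᵀ)) ∧
    (∀ r, (D * Dᵀ) * ((2 - θ r)⁻¹ • (D * E r * Dᵀ)) =
        (2 - θ r) • ((2 - θ r)⁻¹ • (D * E r * Dᵀ))) ∧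
    (((n : ℝ) + 1)⁻¹ • J) * (((n : ℝ) + 1)⁻¹ • J) = ((n : ℝ) + 1)⁻¹ • J ∧
    (D * Dᵀ) * (((n : ℝ) + 1)⁻¹ • J) = 0 ∧
    ((n : ℝ) + 1)⁻¹ • J + ∑ r, (2 - θ r)⁻¹ • (D * E r * Dᵀ) = 1 := by
  have hDD : Dᵀ * D = (2 : ℝ) • 1 - A := by
    rw [eq_pathIncidence hD, pathIncidence_transpose_mul_self hA]
  have hcol : ∀ j, ∑ i, D i j = 0 := by
    rw [eq_pathIncidence hD]
    exact sum_pathIncidence_apply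
  have hc : ∀ r, 2 - θ r ≠ 0 := fun r ↦ (sub_pos.2 (hθ2 r)).ne'
  have hE : CompleteOrthogonalIdempotents E := ⟨⟨hidem, fun r s ↦ horth r s⟩, hsum⟩
  have hDE : ∀ r, Dᵀ * D * E r = (2 - θ r) • E r := fun r ↦ by
    rw [hDD, sub_mul, smul_mul_assoc, Matrix.one_mul, hAE, hE.sum_smul_mul, sub_smul]
  have hJD := mul_eq_zero_of_forall_eq_one hJ hcol
  have hDJ := transpose_mul_eq_zero_of_forall_eq_one hJ hcol
  have hP : IsIdempotentElem (((n : ℝ) + 1)⁻¹ • J) := by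
    rw [IsIdempotentElem, smul_mul_smul_comm, mul_self_of_forall_eq_one hJ, smul_smul,
      Fintype.card_fin, Nat.cast_succ, inv_mul_cancel_right₀ (Nat.cast_add_one_ne_zero n)]
  refine ⟨fun r ↦ (hE.toOrthogonalIdempotents.inv_smul_conj hc hDE).idem r,
    fun r ↦ by rw [transpose_smul, transpose_conj, hsym], fun r ↦ ?_, hP, ?_,
    hE.add_sum_inv_smul_conj_eq_one hsym hc hDE hP ?_ ?_ ?_ ?_⟩
  · rw [Matrix.mul_smul, mul_transpose_mul_conj_of_mul_eq_smul (hDE r), smul_comm]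
  · rw [Matrix.mul_smul, Matrix.mul_assoc, hDJ, Matrix.mul_zero, smul_zero]
  · rw [transpose_smul, transpose_of_forall_eq_one hJ]
  · rw [Matrix.smul_mul, hJD, smul_zero]
  · rw [Matrix.mul_smul, hDJ, smul_zero]
  · simp [trace_of_forall_eq_one hJ, Nat.cast_add_one_ne_zero, add_comm]

open Matrix in
/-- If `E_1, …, E_{n-1}` are the spectral idempotents of `A(P_{n-1})` with eigenvalues
`θ_r < 2`, then the spectral idempotents of the Laplacian `L(P_n) = D Dᵀ` are `(1/n) J`
together with `(2 - θ_r)⁻¹ D E_r Dᵀ`: each is a symmetric idempotent projecting onto an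
eigenspace of `L` (with eigenvalues `0` and `2 - θ_r` respectively), and they sum to
the identity.  (Here stated with paths on `n+1` and `n` vertices.) -/
theorem laplacian_path_idempotents
    (n : ℕ) (D : Matrix (Fin (n + 1)) (Fin n) ℝ)
    (hD : ∀ i j, D i j =
      if i.val = j.val then 1 else if i.val = j.val + 1 then -1 else 0)
    (A : Matrix (Fin n) (Fin n) ℝ)
    (hA : ∀ j k, A j k = if j.val + 1 = k.val ∨ k.val + 1 = j.val then 1 else 0)
    (θ : Fin n → ℝ) (E : Fin n → Matrix (Fin n) (Fin n) ℝ)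
    (hθ : Function.Injective θ) (hθ2 : ∀ r, θ r < 2)
    (hsym : ∀ r, (E r)ᵀ = E r)
    (hidem : ∀ r, E r * E r = E r)
    (horth : ∀ r s, r ≠ s → E r * E s = 0)
    (hsum : ∑ r, E r = 1)
    (hAE : A = ∑ r, θ r • E r)
    (J : Matrix (Fin (n + 1)) (Fin (n + 1)) ℝ) (hJ : ∀ j k, J j k = 1) :
    (∀ r, ((2 - θ r)⁻¹ • (D * E r * Dᵀ)) * ((2 - θ r)⁻¹ • (D * E r * Dᵀ)) =
        (2 - θ r)⁻¹ • (D * E r * Dᵀ)) ∧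
    (∀ r, ((2 - θ r)⁻¹ • (D * E r * Dᵀ))ᵀ = (2 - θ r)⁻¹ • (D * E r * Dᵀ)) ∧
    (∀ r, (D * Dᵀ) * ((2 - θ r)⁻¹ • (D * E r * Dᵀ)) =
        (2 - θ r) • ((2 - θ r)⁻¹ • (D * E r * Dᵀ))) ∧
    (((n : ℝ) + 1)⁻¹ • J) * (((n : ℝ) + 1)⁻¹ • J) = ((n : ℝ) + 1)⁻¹ • J ∧
    (D * Dᵀ) * (((n : ℝ) + 1)⁻¹ • J) = 0 ∧
    ((n : ℝ) + 1)⁻¹ • J + ∑ r, (2 - θ r)⁻¹ • (D * E r * Dᵀ) = 1 :=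
  laplacian_path_idempotents_general n D hD A hA θ E hθ2 hsym hidem horth hsum hAE J hJ
end

section
/- For odd n, the average mixing matrix of the cycle C_n equals ((n-1)/n²)·J + (1/n)·I; for even n it equals ((n-2)/n²)·J + (1/n)·(I + P^{n/2}), where P is the cyclic shift permutation matrix. -/
/-!
The Fourier matrices `F_s j k = ζ^(s(j-k)) / n` (`s : Fin n`) sum to the identity and are
eigenvectors of every circulant matrix; for the cycle the eigenvalue of `F_s` is `ζ^s + ζ^(-s)`,
which equals that of `F_t` exactly when `t = ±s`. Hence every spectral idempotent `E_r` of `A` is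
the sum of the `F_s` with `ζ^s + ζ^(-s) = θ_r`, and `∑ E_r ⊙ E_r = ∑_s ∑_{t = ±s} F_s ⊙ F_t`.
As `(F_s ⊙ F_t) j k = ζ^((s+t)(j-k)) / n²`, the pairs `t = -s ≠ s` contribute `1/n²` each, while
the pairs `t = s` contribute `1/n` in total if `2(j-k) = 0` and nothing otherwise. The parity of
`n` decides which elements of `ℤ/n` are killed by `2`.
-/

open Matrix Finset

namespace CompleteOrthogonalIdempotents

variable {K R ι : Type*} [Field K] [Ring R] [Algebra K R] [Fintype ι]
  {E : ι → R} {θ : ι → K} {a : R}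

lemma mul_eq_smul_of_eq_sum_smul (hE : CompleteOrthogonalIdempotents E)
    (ha : a = ∑ r, θ r • E r) (r : ι) : E r * a = θ r • E r := by
  rw [ha, mul_sum, sum_eq_single r]
  · rw [mul_smul_comm, (hE.idem r).eq]
  · intro s _ hs
    rw [mul_smul_comm, hE.ortho hs.symm, smul_zero]
  · simp

lemma mul_eq_zero_of_mul_eq_smul (hE : CompleteOrthogonalIdempotents E)
    (ha : a = ∑ r, θ r • E r) {x : R} {μ : K} (hx : a * x = μ • x) {r : ι} (hne : θ r ≠ μ) :
    E r * x = 0 := by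
  have h : (θ r - μ) • (E r * x) = 0 := by
    rw [sub_smul, ← smul_mul_assoc, ← hE.mul_eq_smul_of_eq_sum_smul ha, mul_assoc, hx,
      mul_smul_comm, sub_self]
  exact (smul_eq_zero.mp h).resolve_left (sub_ne_zero.mpr hne)

lemma exists_eq_of_mul_eq_smul (hE : CompleteOrthogonalIdempotents E)
    (ha : a = ∑ r, θ r • E r) {x : R} {μ : K} (hx : a * x = μ • x) (hx0 : x ≠ 0) :
    ∃ r, θ r = μ := by
  by_contra! h
  refine hx0 ?_
  calc x = ∑ r, E r * x := by rw [← sum_mul, hE.complete, one_mul]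
    _ = 0 := sum_eq_zero fun r _ => hE.mul_eq_zero_of_mul_eq_smul ha hx (h r)

lemma eq_sum_filter_of_mul_eq_smul [DecidableEq K] {κ : Type*} [Fintype κ] {F : κ → R}
    {μ : κ → K} (hE : CompleteOrthogonalIdempotents E) (ha : a = ∑ r, θ r • E r)
    (hθ : Function.Injective θ) (hF : ∑ s, F s = 1) (haF : ∀ s, a * F s = μ s • F s) (r : ι) :
    E r = ∑ s with μ s = θ r, F s := by
  have hFs {s : κ} (hs : μ s = θ r) : E r * F s = F s := by
    calc E r * F s = ∑ r', E r' * F s := by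
          rw [sum_eq_single r (fun r' _ hr' => ?_) (absurd (mem_univ r))]
          exact hE.mul_eq_zero_of_mul_eq_smul ha (haF s) (hs ▸ hθ.ne hr')
      _ = F s := by rw [← sum_mul, hE.complete, one_mul]
  calc E r = ∑ s, E r * F s := by rw [← mul_sum, hF, mul_one]
    _ = ∑ s with μ s = θ r, E r * F s :=
        (sum_filter_of_ne fun s _ h => of_not_not fun hne =>
          h (hE.mul_eq_zero_of_mul_eq_smul ha (haF s) (Ne.symm hne))).symm
    _ = ∑ s with μ s = θ r, F s := sum_congr rfl fun s hs => hFs (mem_filter.mp hs).2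

end CompleteOrthogonalIdempotents

lemma Matrix.sum_hadamard_self_of_eq_sum_filter {ι κ K m n α : Type*} [Fintype ι] [Fintype κ]
    [DecidableEq K] [NonUnitalNonAssocSemiring α] {E : ι → Matrix m n α} {F : κ → Matrix m n α}
    {θ : ι → K} {μ : κ → K} (hθ : Function.Injective θ) (hμ : ∀ s, ∃ r, θ r = μ s)
    (hE : ∀ r, E r = ∑ s with μ s = θ r, F s) :
    ∑ r, E r ⊙ E r = ∑ s, ∑ t with μ t = μ s, F s ⊙ F t := by
  classical
  choose c hc using hμ
  have hfiber (r : ι) (s : κ) : μ s = θ r ↔ c s = r := by rw [← hc, hθ.eq_iff]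
  ext j k
  simp only [Matrix.sum_apply, hadamard_apply, hE, hfiber, sum_mul_sum]
  rw [← sum_fiberwise univ c]
  refine sum_congr rfl fun r _ => sum_congr rfl fun s hs =>
    sum_congr (filter_congr fun t _ => ?_) fun _ _ => rfl
  rw [← hc s, (mem_filter.mp hs).2, hfiber]

lemma add_inv_eq_add_inv_iff {K : Type*} [Field K] {x y : K} (hx : x ≠ 0) (hy : y ≠ 0) :
    y + y⁻¹ = x + x⁻¹ ↔ y = x ∨ y = x⁻¹ := by
  have key : y + y⁻¹ - (x + x⁻¹) = (y - x) * (y - x⁻¹) / y := by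
    field_simp
    ring
  rw [← sub_eq_zero, key, div_eq_zero_iff, or_iff_left hy, mul_eq_zero, sub_eq_zero, sub_eq_zero]


namespace Fin

variable {n : ℕ} [NeZero n]

lemma add_self_eq_zero_iff (s : Fin n) : s + s = 0 ↔ s.val + s.val = 0 ∨ s.val + s.val = n := by
  have hs := s.isLt
  rw [Fin.ext_iff, Fin.val_add, Fin.val_zero]
  rcases lt_or_ge (s.val + s.val) n with h | h
  · rw [Nat.mod_eq_of_lt h]; omega
  · rw [Nat.mod_eq_sub_mod h, Nat.mod_eq_of_lt (by omega)]; omega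

lemma add_self_eq_zero_iff_of_odd (hn : Odd n) (s : Fin n) : s + s = 0 ↔ s = 0 := by
  obtain ⟨k, rfl⟩ := hn
  rw [add_self_eq_zero_iff, Fin.ext_iff, Fin.val_zero]
  omega

lemma add_self_eq_zero_iff_of_even (hn : Even n) (s : Fin n) :
    s + s = 0 ↔ s = 0 ∨ s = Fin.ofNat n (n / 2) := by
  have hn0 : n ≠ 0 := NeZero.ne n
  obtain ⟨k, rfl⟩ := hn
  rw [add_self_eq_zero_iff, Fin.ext_iff, Fin.ext_iff, Fin.val_zero, Fin.val_ofNat,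
    Nat.mod_eq_of_lt (by omega)]
  omega

lemma one_ne_neg_one (hn : 3 ≤ n) : (1 : Fin n) ≠ -1 := by
  intro h
  have h2 : (1 : Fin n) + 1 = 0 := by nth_rw 2 [h]; exact add_neg_cancel 1
  rw [add_self_eq_zero_iff, Fin.val_one', Nat.mod_eq_of_lt (by omega)] at h2
  omega

lemma card_filter_add_self_eq_zero_of_odd (hn : Odd n) : #{s : Fin n | s + s = 0} = 1 := by
  rw [filter_congr fun s _ => add_self_eq_zero_iff_of_odd hn s, filter_eq', if_pos (mem_univ _),
    card_singleton]

lemma ofNat_half_ne_zero (hn : Even n) : Fin.ofNat n (n / 2) ≠ 0 := by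
  have hn0 : n ≠ 0 := NeZero.ne n
  obtain ⟨k, rfl⟩ := hn
  rw [Ne, Fin.ext_iff, Fin.val_zero, Fin.val_ofNat, Nat.mod_eq_of_lt (by omega)]
  omega

lemma card_filter_add_self_eq_zero_of_even (hn : Even n) : #{s : Fin n | s + s = 0} = 2 := by
  have hset : ({s : Fin n | s + s = 0} : Finset (Fin n)) = {0, Fin.ofNat n (n / 2)} := by
    ext s
    simp [add_self_eq_zero_iff_of_even hn]
  rw [hset, card_pair (ofNat_half_ne_zero hn).symm]

end Fin

section Fourier

variable {n : ℕ} {ζ : ℂ}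

lemma IsPrimitiveRoot.pow_mod_eq (hζ : IsPrimitiveRoot ζ n) (a : ℕ) : ζ ^ (a % n) = ζ ^ a := by
  rw [hζ.eq_orderOf, pow_mod_orderOf]

/-- `ζ ^ (s d)`, computed on the representatives in `[0, n)` so that the (non-instance) ring
structure of `Fin n` is never needed; it is biadditive once `ζ ^ n = 1`. -/
def fourierChar (ζ : ℂ) (s d : Fin n) : ℂ := ζ ^ (s.val * d.val)

lemma fourierChar_comm (s d : Fin n) : fourierChar ζ s d = fourierChar ζ d s := by
  rw [fourierChar, fourierChar, mul_comm]

lemma fourierChar_add_right (hζ : IsPrimitiveRoot ζ n) (s d e : Fin n) :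
    fourierChar ζ s (d + e) = fourierChar ζ s d * fourierChar ζ s e := by
  rw [fourierChar, Fin.val_add, ← hζ.pow_mod_eq, Nat.mul_mod, Nat.mod_mod, ← Nat.mul_mod,
    hζ.pow_mod_eq, mul_add, pow_add, fourierChar, fourierChar]

lemma fourierChar_add_left (hζ : IsPrimitiveRoot ζ n) (s t d : Fin n) :
    fourierChar ζ (s + t) d = fourierChar ζ s d * fourierChar ζ t d := by
  simp only [fourierChar_comm _ d, fourierChar_add_right hζ]

noncomputable def fourierIdempotent (ζ : ℂ) (s : Fin n) : Matrix (Fin n) (Fin n) ℂ :=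
  of fun j k => fourierChar ζ s (j - k) / n

lemma fourierIdempotent_hadamard_apply (s t j k : Fin n) :
    (fourierIdempotent ζ s ⊙ fourierIdempotent ζ t) j k =
      fourierChar ζ s (j - k) * fourierChar ζ t (j - k) / n ^ 2 := by
  rw [hadamard_apply, fourierIdempotent, fourierIdempotent, of_apply, of_apply, div_mul_div_comm,
    sq]

variable [NeZero n]

lemma fourierChar_zero_right (s : Fin n) : fourierChar ζ s 0 = 1 := by
  simp [fourierChar]

lemma fourierChar_neg_right (hζ : IsPrimitiveRoot ζ n) (s d : Fin n) :
    fourierChar ζ s (-d) = (fourierChar ζ s d)⁻¹ := by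
  refine eq_inv_of_mul_eq_one_left ?_
  rw [← fourierChar_add_right hζ, neg_add_cancel, fourierChar_zero_right]

lemma fourierChar_neg_left (hζ : IsPrimitiveRoot ζ n) (s d : Fin n) :
    fourierChar ζ (-s) d = (fourierChar ζ s d)⁻¹ := by
  rw [fourierChar_comm, fourierChar_neg_right hζ, fourierChar_comm]

lemma fourierChar_ne_zero (hζ : IsPrimitiveRoot ζ n) (s d : Fin n) : fourierChar ζ s d ≠ 0 :=
  pow_ne_zero _ (hζ.ne_zero (NeZero.ne n))

lemma fourierChar_one_right (hζ : IsPrimitiveRoot ζ n) (s : Fin n) :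
    fourierChar ζ s 1 = ζ ^ s.val := by
  rw [fourierChar, Fin.val_one', ← hζ.pow_mod_eq, Nat.mul_mod, Nat.mod_mod, ← Nat.mul_mod,
    hζ.pow_mod_eq, mul_one]

lemma fourierChar_one_right_injective (hζ : IsPrimitiveRoot ζ n) :
    Function.Injective fun s : Fin n => fourierChar ζ s 1 :=
  fun s t h => Fin.ext <| hζ.pow_inj s.isLt t.isLt <| by
    simpa only [fourierChar_one_right hζ] using h

lemma sum_fourierChar (hζ : IsPrimitiveRoot ζ n) (d : Fin n) :
    ∑ s, fourierChar ζ s d = if d = 0 then (n : ℂ) else 0 := by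
  split_ifs with hd
  · simp [hd, fourierChar_zero_right]
  have hx : ζ ^ d.val ≠ 1 := by
    rw [Ne, hζ.pow_eq_one_iff_dvd]
    exact fun h => hd (Fin.ext (Nat.eq_zero_of_dvd_of_lt h d.isLt))
  have hxn : (ζ ^ d.val) ^ n = 1 := by rw [← pow_mul, mul_comm, pow_mul, hζ.pow_eq_one, one_pow]
  calc ∑ s : Fin n, fourierChar ζ s d = ∑ i ∈ range n, (ζ ^ d.val) ^ i := by
        rw [← Fin.sum_univ_eq_sum_range]
        exact sum_congr rfl fun s _ => by rw [fourierChar, mul_comm, pow_mul]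
    _ = 0 := by rw [geom_sum_eq hx, hxn, sub_self, zero_div]

lemma sum_fourierIdempotent (hζ : IsPrimitiveRoot ζ n) :
    ∑ s : Fin n, fourierIdempotent ζ s = 1 := by
  ext j k
  simp only [Matrix.sum_apply, fourierIdempotent, of_apply, ← sum_div, sum_fourierChar hζ,
    sub_eq_zero, one_apply]
  split_ifs <;> simp [NeZero.ne n]

lemma fourierIdempotent_ne_zero (s : Fin n) : fourierIdempotent ζ s ≠ 0 := by
  intro h
  have h00 := congrFun (congrFun h 0) 0
  simp [fourierIdempotent, fourierChar_zero_right, NeZero.ne n] at h00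

lemma circulant_mul_fourierIdempotent (hζ : IsPrimitiveRoot ζ n) (v : Fin n → ℂ) (s : Fin n) :
    circulant v * fourierIdempotent ζ s =
      (∑ d, v d * fourierChar ζ s (-d)) • fourierIdempotent ζ s := by
  ext j k
  simp only [mul_apply, circulant_apply, fourierIdempotent, of_apply, Matrix.smul_apply,
    smul_eq_mul, sum_mul]
  refine Fintype.sum_equiv (Equiv.subLeft j) _ _ fun l => ?_
  rw [Equiv.subLeft_apply, mul_div_assoc', mul_div_assoc', mul_assoc, ← fourierChar_add_right hζ]
  congr 3
  abel

lemma sum_sum_fourierIdempotent_hadamard_apply (hζ : IsPrimitiveRoot ζ n) (j k : Fin n) :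
    ∑ s, ∑ t with t = s ∨ t = -s, (fourierIdempotent ζ s ⊙ fourierIdempotent ζ t) j k =
      (if (j - k) + (j - k) = 0 then (n : ℂ)⁻¹ else 0) +
        (n - #{s : Fin n | s + s = 0}) / n ^ 2 := by
  have hinner (s d : Fin n) : ∑ t with t = s ∨ t = -s, fourierChar ζ s d * fourierChar ζ t d =
      fourierChar ζ s (d + d) + 1 - if s + s = 0 then 1 else 0 := by
    have hneg : fourierChar ζ s d * fourierChar ζ (-s) d = 1 := by
      rw [← fourierChar_add_left hζ, add_neg_cancel, fourierChar_comm, fourierChar_zero_right]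
    rw [fourierChar_add_right hζ]
    by_cases hs : s + s = 0
    · have hs' : -s = s := neg_eq_of_add_eq_zero_left hs
      have hfilter : ({t | t = s ∨ t = -s} : Finset (Fin n)) = {s} := by ext t; simp [hs']
      rw [hfilter, sum_singleton, if_pos hs, ← hneg, hs']
      ring
    · have hs' : s ≠ -s := fun h => hs (by nth_rw 1 [h]; exact neg_add_cancel s)
      have hfilter : ({t | t = s ∨ t = -s} : Finset (Fin n)) = {s, -s} := by ext t; simp
      rw [hfilter, sum_pair hs', if_neg hs, hneg, sub_zero]
  calc _ = ∑ s : Fin n,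
        (fourierChar ζ s ((j - k) + (j - k)) + 1 - if s + s = 0 then 1 else 0) / n ^ 2 := by
        simp only [fourierIdempotent_hadamard_apply, ← sum_div, hinner]
    _ = _ := by
        rw [← sum_div, sum_sub_distrib, sum_add_distrib, sum_fourierChar hζ, sum_boole, sum_const,
          card_univ, Fintype.card_fin, nsmul_one]
        have : (n : ℂ) ≠ 0 := NeZero.ne _
        split_ifs
        · field_simp
          ring
        · ring

end Fourier

section Cycle

variable {n : ℕ} [NeZero n]

lemma sum_ite_eq_one_or_eq_neg_one_mul {R : Type*} [NonAssocSemiring R] (hn : 3 ≤ n)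
    (f : Fin n → R) : ∑ d, (if d = 1 ∨ d = -1 then 1 else 0) * f d = f 1 + f (-1) := by
  simp only [ite_mul, one_mul, zero_mul]
  rw [← sum_filter]
  have hfilter : ({d | d = 1 ∨ d = -1} : Finset (Fin n)) = {1, -1} := by ext; simp
  rw [hfilter, sum_pair (Fin.one_ne_neg_one hn)]

lemma fourierChar_one_add_neg_one_eq_iff {ζ : ℂ} (hζ : IsPrimitiveRoot ζ n) (s t : Fin n) :
    fourierChar ζ t 1 + fourierChar ζ t (-1) = fourierChar ζ s 1 + fourierChar ζ s (-1) ↔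
      t = s ∨ t = -s := by
  rw [fourierChar_neg_right hζ, fourierChar_neg_right hζ,
    add_inv_eq_add_inv_iff (fourierChar_ne_zero hζ s 1) (fourierChar_ne_zero hζ t 1),
    ← fourierChar_neg_left hζ, (fourierChar_one_right_injective hζ).eq_iff,
    (fourierChar_one_right_injective hζ).eq_iff]

theorem sum_hadamard_self_apply_of_circulant_cycle {ι : Type*} [Fintype ι] (hn : 3 ≤ n)
    {N : ι → Matrix (Fin n) (Fin n) ℂ} {θ : ι → ℂ} (hN : CompleteOrthogonalIdempotents N)
    (hθ : Function.Injective θ)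
    (hdecomp : circulant (fun d : Fin n => if d = 1 ∨ d = -1 then (1 : ℂ) else 0) =
      ∑ r, θ r • N r) (j k : Fin n) :
    (∑ r, N r ⊙ N r) j k = (if (j - k) + (j - k) = 0 then (n : ℂ)⁻¹ else 0) +
      (n - #{s : Fin n | s + s = 0}) / n ^ 2 := by
  obtain ⟨ζ, hζ⟩ : ∃ ζ : ℂ, IsPrimitiveRoot ζ n :=
    ⟨_, Complex.isPrimitiveRoot_exp n (NeZero.ne n)⟩
  set μ : Fin n → ℂ := fun s => fourierChar ζ s 1 + fourierChar ζ s (-1)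
  have haF (s : Fin n) : circulant (fun d : Fin n => if d = 1 ∨ d = -1 then (1 : ℂ) else 0) *
      fourierIdempotent ζ s = μ s • fourierIdempotent ζ s := by
    rw [circulant_mul_fourierIdempotent hζ, sum_ite_eq_one_or_eq_neg_one_mul hn, neg_neg, add_comm]
  have hμ (s : Fin n) : ∃ r, θ r = μ s :=
    hN.exists_eq_of_mul_eq_smul hdecomp (haF s) (fourierIdempotent_ne_zero s)
  have hNF := hN.eq_sum_filter_of_mul_eq_smul hdecomp hθ (sum_fourierIdempotent hζ) haF
  rw [sum_hadamard_self_of_eq_sum_filter hθ hμ hNF, Matrix.sum_apply]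
  simp only [Matrix.sum_apply, μ, fourierChar_one_add_neg_one_eq_iff hζ]
  exact sum_sum_fourierIdempotent_hadamard_apply hζ j k

theorem sum_hadamard_self_apply_of_cycle {ι : Type*} [Fintype ι] (hn : 3 ≤ n)
    {A : Matrix (Fin n) (Fin n) ℝ} (hA : ∀ j k, A j k = if j = k + 1 ∨ k = j + 1 then 1 else 0)
    {E : ι → Matrix (Fin n) (Fin n) ℝ} {θ : ι → ℝ} (hE : CompleteOrthogonalIdempotents E)
    (hθ : Function.Injective θ) (hdecomp : A = ∑ r, θ r • E r) (j k : Fin n) :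
    (∑ r, E r ⊙ E r) j k = (if (j - k) + (j - k) = 0 then (n : ℝ)⁻¹ else 0) +
      (n - #{s : Fin n | s + s = 0}) / n ^ 2 := by
  let f := (Complex.ofRealHom : ℝ →+* ℂ).mapMatrix (m := Fin n)
  have hcirc : circulant (fun d : Fin n => if d = 1 ∨ d = -1 then (1 : ℂ) else 0) =
      ∑ r, (θ r : ℂ) • f (E r) := by
    ext j k
    have hsum := congrFun (congrFun hdecomp j) k
    simp only [hA, Matrix.sum_apply, Matrix.smul_apply, smul_eq_mul] at hsum
    simp only [circulant_apply, Matrix.sum_apply, Matrix.smul_apply, smul_eq_mul, f,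
      RingHom.mapMatrix_apply, map_apply, Complex.ofRealHom_eq_coe, ← Complex.ofReal_mul,
      ← Complex.ofReal_sum, ← hsum]
    have h1 : j - k = 1 ↔ j = k + 1 := sub_eq_iff_eq_add'
    have h2 : j - k = -1 ↔ k = j + 1 := by
      rw [sub_eq_iff_eq_add', ← sub_eq_add_neg, eq_sub_iff_add_eq, eq_comm]
    simp only [h1, h2]
    split_ifs <;> simp
  have h := sum_hadamard_self_apply_of_circulant_cycle hn (hE.map f)
    (Complex.ofReal_injective.comp hθ) hcirc j k
  simp only [Matrix.sum_apply, hadamard_apply, Function.comp_apply, f, RingHom.mapMatrix_apply,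
    map_apply, Complex.ofRealHom_eq_coe] at h
  apply Complex.ofReal_injective
  rw [Matrix.sum_apply]
  push_cast [hadamard_apply, h, apply_ite ((↑) : ℝ → ℂ)]
  rfl

end Cycle

open Matrix in
theorem average_mixing_cycle_general
    (n m : ℕ) [NeZero n] (hn : 3 ≤ n)
    (A : Matrix (Fin n) (Fin n) ℝ)
    (hA : ∀ j k, A j k = if j = k + 1 ∨ k = j + 1 then 1 else 0)
    (θ : Fin m → ℝ) (E : Fin m → Matrix (Fin n) (Fin n) ℝ)
    (hθ : Function.Injective θ)
    (hidem : ∀ r, E r * E r = E r)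
    (horth : ∀ r s, r ≠ s → E r * E s = 0)
    (hsum : ∑ r, E r = 1)
    (hdecomp : A = ∑ r, θ r • E r)
    (J P2 : Matrix (Fin n) (Fin n) ℝ)
    (hJ : ∀ j k, J j k = 1)
    (hP2 : ∀ j k, P2 j k = if j = k + Fin.ofNat n (n / 2 : ℕ) then 1 else 0) :
    (Odd n → ∑ r, (E r ⊙ E r) =
        (((n : ℝ) - 1) / (n : ℝ) ^ 2) • J + ((n : ℝ))⁻¹ • (1 : Matrix (Fin n) (Fin n) ℝ)) ∧
    (Even n → ∑ r, (E r ⊙ E r) =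
        (((n : ℝ) - 2) / (n : ℝ) ^ 2) • J +
          ((n : ℝ))⁻¹ • ((1 : Matrix (Fin n) (Fin n) ℝ) + P2)) := by
  have hM := sum_hadamard_self_apply_of_cycle hn hA ⟨⟨hidem, fun r s => horth r s⟩, hsum⟩ hθ
    hdecomp
  refine ⟨fun hodd => ?_, fun heven => ?_⟩
  · ext j k
    rw [hM, Fin.card_filter_add_self_eq_zero_of_odd hodd]
    simp only [Fin.add_self_eq_zero_iff_of_odd hodd, sub_eq_zero, Matrix.add_apply,
      Matrix.smul_apply, hJ, one_apply, smul_eq_mul]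
    split_ifs <;> ring
  · ext j k
    have hiff : j - k + (j - k) = 0 ↔ j = k ∨ j = k + Fin.ofNat n (n / 2) := by
      rw [Fin.add_self_eq_zero_iff_of_even heven, sub_eq_zero, sub_eq_iff_eq_add']
    have hdisj : j = k → j ≠ k + Fin.ofNat n (n / 2) := by
      rintro rfl
      exact (add_ne_left.mpr (Fin.ofNat_half_ne_zero heven)).symm
    rw [hM, Fin.card_filter_add_self_eq_zero_of_even heven]
    simp only [hiff, Matrix.add_apply, Matrix.smul_apply, hJ, hP2, one_apply, smul_eq_mul]
    obtain rfl | hjk := eq_or_ne j k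
    · rw [if_pos (Or.inl rfl), if_pos rfl, if_neg (hdisj rfl)]
      ring
    · simp only [hjk, false_or, if_false]
      split_ifs <;> ring

open Matrix in
/-- For odd `n` the average mixing matrix of the cycle `C_n` equals
`((n-1)/n²) J + (1/n) I`; for even `n` it equals `((n-2)/n²) J + (1/n)(I + P^{n/2})`,
where `P` is the cyclic shift permutation matrix (so `P^{n/2}` is the matrix of the
shift by `n/2`).  Vertices are `Fin n` with addition modulo `n`. -/
theorem average_mixing_cycle
    (n m : ℕ) [NeZero n] (hn : 3 ≤ n)
    (A : Matrix (Fin n) (Fin n) ℝ)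
    (hA : ∀ j k, A j k = if j = k + 1 ∨ k = j + 1 then 1 else 0)
    (θ : Fin m → ℝ) (E : Fin m → Matrix (Fin n) (Fin n) ℝ)
    (hθ : Function.Injective θ)
    (hsym : ∀ r, (E r)ᵀ = E r)
    (hidem : ∀ r, E r * E r = E r)
    (horth : ∀ r s, r ≠ s → E r * E s = 0)
    (hsum : ∑ r, E r = 1)
    (hdecomp : A = ∑ r, θ r • E r)
    (J P2 : Matrix (Fin n) (Fin n) ℝ)
    (hJ : ∀ j k, J j k = 1)
    (hP2 : ∀ j k, P2 j k = if j = k + Fin.ofNat n (n / 2 : ℕ) then 1 else 0) :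
    (Odd n → ∑ r, (E r ⊙ E r) =
        (((n : ℝ) - 1) / (n : ℝ) ^ 2) • J + ((n : ℝ))⁻¹ • (1 : Matrix (Fin n) (Fin n) ℝ)) ∧
    (Even n → ∑ r, (E r ⊙ E r) =
        (((n : ℝ) - 2) / (n : ℝ) ^ 2) • J +
          ((n : ℝ))⁻¹ • ((1 : Matrix (Fin n) (Fin n) ℝ) + P2)) :=
  average_mixing_cycle_general n m hn A hA θ E hθ hidem horth hsum hdecomp J P2 hJ hP2
end

section
/- If X is a graph belonging to a symmetric pseudocyclic association scheme with d classes on n vertices, each nontrivial class having valency m = (n-1)/d, then the average mixing matrix of X is ((n-m+1)/n²)·J + ((m-1)/n)·I. (Equivalently: starting from Koppinen's identity Σ_i (1/(n·v_i))·A_i = Σ_j (1/m_j)·E_j ∘ E_j with v_0 = m_0 = 1 and v_i = m_i = m for i ≥ 1, and using Σ_i A_i = J, Σ_j E_j = I, one gets Σ_{j=1}^d E_j ∘ E_j = ((n-m)/n²)·J + ((m-1)/n)·I, hence M̂ = E_0∘E_0 + Σ_{j≥1} E_j∘E_j with E_0 = J/n gives the stated formula.) -/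
/-!
Split both sides of Koppinen's identity at the trivial class: since `A_0 = I`,
`∑_{i ≠ 0} A_i = J - I`, `E_0 ⊙ E_0 = J / n²` and all nontrivial weights equal `1 / m`, the identity
becomes a linear equation for `∑_{j ≠ 0} E_j ⊙ E_j` in terms of `I` and `J`, which can be solved
as soon as `m ≠ 0`. The remaining case `m = 0` is `n = 1`, where `E_0 = I` forces all other
idempotents to vanish.
-/

open Matrix

theorem koppinen_pseudocyclic_solve {K V : Type*} [Field K] [AddCommGroup V] [Module K V]
    {n m : K} (hn : n ≠ 0) (hm : m ≠ 0) {I J S : V}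
    (h : (1 / n) • I + (1 / (n * m)) • (J - I) = (n ^ 2)⁻¹ • J + (1 / m) • S) :
    (n ^ 2)⁻¹ • J + S = ((n - m + 1) / n ^ 2) • J + ((m - 1) / n) • I := by
  have hS : S = m • ((1 / n) • I + (1 / (n * m)) • (J - I) - (n ^ 2)⁻¹ • J) := by
    rw [h]
    match_scalars <;> field_simp
    ring
  rw [hS]
  match_scalars <;> (field_simp; ring)

theorem Fin.sum_smul_eq_of_forall_ne_zero {K M : Type*} [Semiring K] [AddCommMonoid M]
    [Module K M] {d : ℕ} {w : Fin (d + 1) → K} {c : K} (hw : ∀ i, i ≠ 0 → w i = c)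
    (f : Fin (d + 1) → M) :
    ∑ i, w i • f i = w 0 • f 0 + c • ∑ i : Fin d, f i.succ := by
  rw [Fin.sum_univ_succ, Finset.smul_sum]
  congr 1
  exact Finset.sum_congr rfl fun i _ => by rw [hw _ i.succ_ne_zero]

theorem Matrix.smul_hadamard_smul_of_forall_eq_one {K ι : Type*} [CommSemiring K]
    {J : Matrix ι ι K} (hJ : ∀ i j, J i j = 1) (c : K) :
    (c • J) ⊙ (c • J) = c ^ 2 • J := by
  ext i j
  simp [hJ, sq]

theorem average_mixing_pseudocyclic_general
    (n d : ℕ) (hn : 0 < n) (hd : 0 < d)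
    (A E : Fin (d + 1) → Matrix (Fin n) (Fin n) ℝ)
    (v μ : Fin (d + 1) → ℝ)
    (J : Matrix (Fin n) (Fin n) ℝ) (hJ : ∀ j k, J j k = 1)
    (hA0 : A 0 = 1) (hsumA : ∑ i, A i = J)
    (hE0 : E 0 = ((n : ℝ))⁻¹ • J)
    (hEorth : ∀ j j', j ≠ j' → E j * E j' = 0)
    (hv0 : v 0 = 1) (hμ0 : μ 0 = 1)
    (hvi : ∀ i, i ≠ 0 → v i = ((n : ℝ) - 1) / d)
    (hμi : ∀ i, i ≠ 0 → μ i = ((n : ℝ) - 1) / d)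
    (koppinen : ∑ i, (1 / ((n : ℝ) * v i)) • A i = ∑ j, (1 / μ j) • (E j ⊙ E j)) :
    ∑ j, (E j ⊙ E j) =
      (((n : ℝ) - ((n : ℝ) - 1) / d + 1) / (n : ℝ) ^ 2) • J +
        ((((n : ℝ) - 1) / d - 1) / (n : ℝ)) • (1 : Matrix (Fin n) (Fin n) ℝ) := by
  set m : ℝ := ((n : ℝ) - 1) / d with hm_def
  have hE00 : E 0 ⊙ E 0 = ((n : ℝ) ^ 2)⁻¹ • J := by
    rw [hE0, smul_hadamard_smul_of_forall_eq_one hJ, inv_pow]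
  rw [Fin.sum_univ_succ, hE00]
  rcases eq_or_ne m 0 with hm | hm
  · have hn1 : n = 1 := by
      have hd0 : (d : ℝ) ≠ 0 := by positivity
      simpa [hm_def, hd0, sub_eq_zero] using hm
    subst hn1
    have hJ1 : J = 1 := ext fun i j => by simp [hJ, Subsingleton.elim i j, one_apply]
    have hEsucc : ∀ j : Fin d, E j.succ = 0 := fun j => by
      simpa [hE0, hJ1] using hEorth 0 j.succ j.succ_ne_zero.symm
    simp only [hEsucc, hm, hJ1, hadamard_zero, Finset.sum_const_zero]
    module
  · have hsumA' : ∑ i : Fin d, A i.succ = J - 1 := by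
      rw [Fin.sum_univ_succ, hA0] at hsumA
      exact eq_sub_of_add_eq' hsumA
    rw [Fin.sum_smul_eq_of_forall_ne_zero (c := 1 / ((n : ℝ) * m)) (fun i hi => by rw [hvi i hi]),
      Fin.sum_smul_eq_of_forall_ne_zero (c := 1 / m) (fun j hj => by rw [hμi j hj]),
      hv0, hμ0, hA0, hE00, hsumA'] at koppinen
    exact koppinen_pseudocyclic_solve (by positivity) hm (by simpa using koppinen)

open Matrix in
/-- If `X` is a graph belonging to a symmetric pseudocyclic association scheme with `d`
classes on `n` vertices, each nontrivial class of valency `m = (n-1)/d`, then the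
average mixing matrix of `X` is `((n-m+1)/n²) J + ((m-1)/n) I`.  Here the scheme is given
by Schur idempotents `A_i`, matrix idempotents `E_j`, valencies `v_i` and multiplicities
`m_j`, and Koppinen's identity is assumed. -/
theorem average_mixing_pseudocyclic
    (n d : ℕ) (hn : 0 < n) (hd : 0 < d)
    (A E : Fin (d + 1) → Matrix (Fin n) (Fin n) ℝ)
    (v μ : Fin (d + 1) → ℝ)
    (J : Matrix (Fin n) (Fin n) ℝ) (hJ : ∀ j k, J j k = 1)
    (hA0 : A 0 = 1) (hsumA : ∑ i, A i = J)
    (hE0 : E 0 = ((n : ℝ))⁻¹ • J) (hsumE : ∑ j, E j = 1)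
    (hEsym : ∀ j, (E j)ᵀ = E j) (hEidem : ∀ j, E j * E j = E j)
    (hEorth : ∀ j j', j ≠ j' → E j * E j' = 0)
    (hv0 : v 0 = 1) (hμ0 : μ 0 = 1)
    (hvi : ∀ i, i ≠ 0 → v i = ((n : ℝ) - 1) / d)
    (hμi : ∀ i, i ≠ 0 → μ i = ((n : ℝ) - 1) / d)
    (koppinen : ∑ i, (1 / ((n : ℝ) * v i)) • A i = ∑ j, (1 / μ j) • (E j ⊙ E j)) :
    ∑ j, (E j ⊙ E j) =
      (((n : ℝ) - ((n : ℝ) - 1) / d + 1) / (n : ℝ) ^ 2) • J +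
        ((((n : ℝ) - 1) / d - 1) / (n : ℝ)) • (1 : Matrix (Fin n) (Fin n) ℝ) :=
  average_mixing_pseudocyclic_general n d hn hd A E v μ J hJ hA0 hsumA hE0 hEorth hv0 hμ0 hvi hμi
    koppinen
end

section
/- Vertices u and v of a graph X are strongly cospectral (meaning E_r e_u = ±E_r e_v for every spectral idempotent E_r) if and only if M̂(e_u - e_v) = 0, where M̂ is the average mixing matrix. -/
/-! A symmetric idempotent `P` is the Gram matrix of its columns `x_w := P e_w`, so the quadratic
form of `P ∘ P` at `e_u - e_v` equals `⟨x_u, x_u⟩² + ⟨x_v, x_v⟩² - 2⟨x_u, x_v⟩²`. By Cauchy–Schwarz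
this is at least `(⟨x_u, x_u⟩ - ⟨x_v, x_v⟩)² ≥ 0`, with equality exactly when `x_u = ± x_v`.
These nonnegative forms sum to the quadratic form of `M̂`, so `M̂ (e_u - e_v) = 0` makes each of them
vanish; conversely `E_r e_u = ± E_r e_v` makes columns `u` and `v` of `E_r ∘ E_r` equal. -/

open Matrix

section DotProduct

variable {ι R : Type*} [Fintype ι] [CommRing R] [LinearOrder R] [IsStrictOrderedRing R]

theorem sq_dotProduct_le (x y : ι → R) : (x ⬝ᵥ y) ^ 2 ≤ (x ⬝ᵥ x) * (y ⬝ᵥ y) := by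
  simpa only [dotProduct, sq] using Finset.sum_mul_sq_le_sq_mul_sq Finset.univ x y

theorem two_mul_sq_dotProduct_le (x y : ι → R) :
    2 * (x ⬝ᵥ y) ^ 2 ≤ (x ⬝ᵥ x) ^ 2 + (y ⬝ᵥ y) ^ 2 := by
  nlinarith [sq_dotProduct_le x y, sq_nonneg (x ⬝ᵥ x - y ⬝ᵥ y)]

theorem eq_or_eq_neg_of_two_mul_sq_dotProduct_eq {x y : ι → R}
    (h : 2 * (x ⬝ᵥ y) ^ 2 = (x ⬝ᵥ x) ^ 2 + (y ⬝ᵥ y) ^ 2) : x = y ∨ x = -y := by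
  have hnorm : x ⬝ᵥ x = y ⬝ᵥ y := by
    nlinarith [sq_dotProduct_le x y, sq_nonneg (x ⬝ᵥ x - y ⬝ᵥ y)]
  have hinner : (x ⬝ᵥ y) ^ 2 = (x ⬝ᵥ x) ^ 2 := by
    rw [← hnorm] at h
    linarith
  rcases sq_eq_sq_iff_eq_or_eq_neg.1 hinner with hxy | hxy
  · left
    rw [← sub_eq_zero, ← dotProduct_self_eq_zero]
    simp only [sub_dotProduct, dotProduct_sub, dotProduct_comm y x]
    linear_combination -2 * hxy - hnorm
  · right
    rw [← add_neg_eq_zero, neg_neg, ← dotProduct_self_eq_zero]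
    simp only [add_dotProduct, dotProduct_add, dotProduct_comm y x]
    linear_combination 2 * hxy - hnorm

end DotProduct

section Projection

variable {n R : Type*} [Fintype n] [CommRing R]

theorem apply_eq_col_dotProduct_col {P : Matrix n n R} (hsym : Pᵀ = P)
    (hidem : P * P = P) (i j : n) : P i j = P.col i ⬝ᵥ P.col j := by
  calc P i j = (Pᵀ * P) i j := by rw [hsym, hidem]
    _ = P.col i ⬝ᵥ P.col j := rfl

variable [DecidableEq n]

theorem single_sub_single_dotProduct_mulVec (N : Matrix n n R) (u v : n) :
    (Pi.single u 1 - Pi.single v 1) ⬝ᵥ N *ᵥ (Pi.single u 1 - Pi.single v 1) =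
      N u u - N u v - N v u + N v v := by
  simp only [mulVec_sub, mulVec_single_one, sub_dotProduct, single_dotProduct, one_mul,
    Pi.sub_apply, col_apply]
  ring

theorem hadamard_self_mulVec_single_sub_single_eq_zero {P : Matrix n n R} {u v : n}
    (h : P.col u = P.col v ∨ P.col u = -P.col v) :
    (P ⊙ P) *ᵥ (Pi.single u 1 - Pi.single v 1) = 0 := by
  ext i
  simp only [mulVec_sub, mulVec_single_one, Pi.sub_apply, col_apply, hadamard_apply,
    Pi.zero_apply]
  rcases h with h | h <;> simp [← col_apply, h]

theorem single_sub_single_dotProduct_hadamard_self_mulVec {P : Matrix n n R}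
    (hsym : Pᵀ = P) (hidem : P * P = P) (u v : n) :
    (Pi.single u 1 - Pi.single v 1) ⬝ᵥ (P ⊙ P) *ᵥ (Pi.single u 1 - Pi.single v 1) =
      (P.col u ⬝ᵥ P.col u) ^ 2 + (P.col v ⬝ᵥ P.col v) ^ 2 - 2 * (P.col u ⬝ᵥ P.col v) ^ 2 := by
  have hvu : P v u = P u v := congrFun₂ hsym u v
  simp only [single_sub_single_dotProduct_mulVec, hadamard_apply, hvu,
    ← apply_eq_col_dotProduct_col hsym hidem]
  ring

variable [LinearOrder R] [IsStrictOrderedRing R] {P : Matrix n n R}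

theorem single_sub_single_dotProduct_hadamard_self_mulVec_nonneg (hsym : Pᵀ = P)
    (hidem : P * P = P) (u v : n) :
    0 ≤ (Pi.single u 1 - Pi.single v 1) ⬝ᵥ (P ⊙ P) *ᵥ (Pi.single u 1 - Pi.single v 1) := by
  rw [single_sub_single_dotProduct_hadamard_self_mulVec hsym hidem, sub_nonneg]
  exact two_mul_sq_dotProduct_le _ _

theorem col_eq_or_eq_neg_of_single_sub_single_dotProduct_hadamard_self_mulVec_eq_zero
    (hsym : Pᵀ = P) (hidem : P * P = P) {u v : n}
    (h : (Pi.single u 1 - Pi.single v 1) ⬝ᵥ (P ⊙ P) *ᵥ (Pi.single u 1 - Pi.single v 1) = 0) :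
    P.col u = P.col v ∨ P.col u = -P.col v := by
  rw [single_sub_single_dotProduct_hadamard_self_mulVec hsym hidem, sub_eq_zero] at h
  exact eq_or_eq_neg_of_two_mul_sq_dotProduct_eq h.symm

end Projection

open Matrix in
theorem strongly_cospectral_iff_average_mixing_ker_general
    (n m : ℕ) (E : Fin m → Matrix (Fin n) (Fin n) ℝ)
    (hsym : ∀ r, (E r)ᵀ = E r)
    (hidem : ∀ r, E r * E r = E r)
    (u v : Fin n) :
    (∀ r, (E r).mulVec (Pi.single u 1) = (E r).mulVec (Pi.single v 1) ∨
        (E r).mulVec (Pi.single u 1) = -(E r).mulVec (Pi.single v 1)) ↔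
      (∑ r, (E r ⊙ E r)).mulVec (Pi.single u 1 - Pi.single v 1) = 0 := by
  simp only [mulVec_single_one]
  constructor
  · intro h
    rw [sum_mulVec]
    exact Finset.sum_eq_zero fun r _ => hadamard_self_mulVec_single_sub_single_eq_zero (h r)
  · intro h r
    have hsum : ∑ r, (Pi.single u 1 - Pi.single v 1) ⬝ᵥ (E r ⊙ E r) *ᵥ
        (Pi.single u 1 - Pi.single v 1) = 0 := by
      rw [← dotProduct_sum, ← sum_mulVec, h, dotProduct_zero]
    rw [Finset.sum_eq_zero_iff_of_nonneg fun r _ =>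
      single_sub_single_dotProduct_hadamard_self_mulVec_nonneg (hsym r) (hidem r) u v] at hsum
    exact col_eq_or_eq_neg_of_single_sub_single_dotProduct_hadamard_self_mulVec_eq_zero
      (hsym r) (hidem r) (hsum r (Finset.mem_univ r))

open Matrix in
/-- Vertices `u` and `v` of a graph `X` are strongly cospectral (meaning
`E_r e_u = ± E_r e_v` for every spectral idempotent `E_r`) if and only if
`M̂ (e_u - e_v) = 0`, where `M̂ = ∑ r, E r ⊙ E r` is the average mixing matrix. -/
theorem strongly_cospectral_iff_average_mixing_ker
    (n m : ℕ) (A : Matrix (Fin n) (Fin n) ℝ)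
    (θ : Fin m → ℝ) (E : Fin m → Matrix (Fin n) (Fin n) ℝ)
    (hθ : Function.Injective θ)
    (hsym : ∀ r, (E r)ᵀ = E r)
    (hidem : ∀ r, E r * E r = E r)
    (horth : ∀ r s, r ≠ s → E r * E s = 0)
    (hsum : ∑ r, E r = 1)
    (hA : A = ∑ r, θ r • E r)
    (u v : Fin n) :
    (∀ r, (E r).mulVec (Pi.single u 1) = (E r).mulVec (Pi.single v 1) ∨
        (E r).mulVec (Pi.single u 1) = -(E r).mulVec (Pi.single v 1)) ↔
      (∑ r, (E r ⊙ E r)).mulVec (Pi.single u 1 - Pi.single v 1) = 0 :=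
  strongly_cospectral_iff_average_mixing_ker_general n m E hsym hidem u v
end
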